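/- arXiv:2210.10152 — 11 statements merged into one kernel-verified Lean document; each statement's English description precedes it below -/
import Mathlib

section
/- Let p ≥ 7 be a prime and let E be a finite set of even natural numbers, each at most p − 3, such that the cardinality of E is strictly less than ⌊(p−2)/4⌋. Then there exists an odd integer k with 3 ≤ k ≤ (p−1)/2 such that k + 1 ∉ E and p − k ∉ E. -/
theorem stmt_0 (p : ℕ) (hp : p.Prime) (hp7 : 7 ≤ p) (E : Finset ℕ)
    (hE : ∀ i ∈ E, Even i ∧ i ≤ p - 3) (hcard : E.card < (p - 2) / 4) :
    ∃ k : ℕ, Odd k ∧ 3 ≤ k ∧ k ≤ (p - 1) / 2 ∧ k + 1 ∉ E ∧ p - k ∉ E := by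
  have hodd : p % 2 = 1 := Nat.odd_iff.mp (hp.odd_of_ne_two (by omega))
  by_contra h
  push_neg at h
  -- the set of candidate k's
  set K : Finset ℕ := (Finset.Icc 1 ((p - 3) / 4)).image (fun j => 2 * j + 1) with hK
  have hKmem : ∀ k ∈ K, Odd k ∧ 3 ≤ k ∧ k ≤ (p - 1) / 2 := by
    intro k hk
    simp only [hK, Finset.mem_image, Finset.mem_Icc] at hk
    obtain ⟨j, ⟨hj1, hj2⟩, rfl⟩ := hk
    exact ⟨⟨j, by ring⟩, by omega, by omega⟩
  have hKcard : K.card = (p - 3) / 4 := by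
    rw [hK, Finset.card_image_of_injective _ (by intro a b hab; dsimp only at hab; omega)]
    simp
  -- each k in K is bad, mapping injectively into E
  have hmap : ∀ k ∈ K, (if k + 1 ∈ E then k + 1 else p - k) ∈ E := by
    intro k hk
    obtain ⟨h1, h2, h3⟩ := hKmem k hk
    by_cases hc : k + 1 ∈ E
    · simp [hc]
    · simp only [hc, if_neg, if_false]
      exact h k h1 h2 h3 hc
  have hinj : Set.InjOn (fun k => if k + 1 ∈ E then k + 1 else p - k) K := by
    intro a ha b hb hab
    obtain ⟨_, ha2, ha3⟩ := hKmem a ha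
    obtain ⟨_, hb2, hb3⟩ := hKmem b hb
    simp only at hab
    by_cases h1 : a + 1 ∈ E <;> by_cases h2 : b + 1 ∈ E <;>
      simp only [h1, h2, if_true, if_false] at hab <;> omega
  have hle : K.card ≤ E.card := Finset.card_le_card_of_injOn _ hmap hinj
  omega
end

section
/- Let p ≥ 7 be a prime, n ≥ 2 an integer, k an odd integer with 3 ≤ k ≤ (p−1)/2, and m an integer with p^{m−2} > 2^n + 1 (equivalently, m > 2 + log_p(2^n+1)). For 1 ≤ i ≤ n set ε_i = k if i is even and ε_i = 0 if i is odd, and set k_i = 2^i·p + ε_i. Then: (a) for all 1 ≤ i < j ≤ n, k_i ≢ k_j (mod p^{m−1}(p−1)); and (b) for any two distinct ordered pairs (i,j) ≠ (s,t) of indices in {1, …, n} with i ≠ j and s ≠ t, one has k_i − k_j ≢ k_s − k_t (mod p^{m−1}(p−1)). -/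
lemma pow2_add_pow2 : ∀ a b c d : ℕ, 2^a + 2^b = 2^c + 2^d → (a = c ∧ b = d) ∨ (a = d ∧ b = c) := by
  intro a
  induction a with
  | zero =>
    intro b c d h
    rcases Nat.eq_zero_or_pos c with hc | hc
    · subst hc
      left
      exact ⟨rfl, Nat.pow_right_injective (le_refl 2) (show (2:ℕ)^_ = 2^_ by omega)⟩
    rcases Nat.eq_zero_or_pos d with hd | hd
    · subst hd
      right
      exact ⟨rfl, Nat.pow_right_injective (le_refl 2) (show (2:ℕ)^_ = 2^_ by omega)⟩
    rcases Nat.eq_zero_or_pos b with hb | hb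
    · subst hb
      have h1 : 2^1 ≤ 2^c := Nat.pow_le_pow_right (by norm_num) hc
      have h2 : 2^1 ≤ 2^d := Nat.pow_le_pow_right (by norm_num) hd
      simp at h1 h2
      omega
    · have h1 : 2 ∣ 2^b := dvd_pow_self 2 hb.ne'
      have h2 : 2 ∣ 2^c := dvd_pow_self 2 hc.ne'
      have h3 : 2 ∣ 2^d := dvd_pow_self 2 hd.ne'
      omega
  | succ a ih =>
    intro b c d h
    have ha1 : 2 ∣ 2^(a+1) := dvd_pow_self 2 (Nat.succ_ne_zero a)
    rcases Nat.eq_zero_or_pos b with hb | hb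
    · subst hb
      rcases Nat.eq_zero_or_pos c with hc | hc
      · subst hc
        right
        exact ⟨Nat.pow_right_injective (le_refl 2) (show (2:ℕ)^_ = 2^_ by omega), rfl⟩
      rcases Nat.eq_zero_or_pos d with hd | hd
      · subst hd
        left
        exact ⟨Nat.pow_right_injective (le_refl 2) (show (2:ℕ)^_ = 2^_ by omega), rfl⟩
      · have h2 : 2 ∣ 2^c := dvd_pow_self 2 hc.ne'
        have h3 : 2 ∣ 2^d := dvd_pow_self 2 hd.ne'
        omega
    have hb1 : 2 ∣ 2^b := dvd_pow_self 2 hb.ne'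
    have hc : 0 < c := by
      rcases Nat.eq_zero_or_pos c with hc | hc
      · subst hc
        rcases Nat.eq_zero_or_pos d with hd | hd
        · subst hd
          have h1 : 2^1 ≤ 2^(a+1) := Nat.pow_le_pow_right (by norm_num) (by omega)
          have h2 : 2^1 ≤ 2^b := Nat.pow_le_pow_right (by norm_num) hb
          simp at h1 h2; omega
        · have h3 : 2 ∣ 2^d := dvd_pow_self 2 hd.ne'
          omega
      · exact hc
    have hd : 0 < d := by
      rcases Nat.eq_zero_or_pos d with hd | hd
      · subst hd
        have h2 : 2 ∣ 2^c := dvd_pow_self 2 hc.ne'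
        omega
      · exact hd
    obtain ⟨b', rfl⟩ : ∃ b', b = b' + 1 := ⟨b - 1, by omega⟩
    obtain ⟨c', rfl⟩ : ∃ c', c = c' + 1 := ⟨c - 1, by omega⟩
    obtain ⟨d', rfl⟩ : ∃ d', d = d' + 1 := ⟨d - 1, by omega⟩
    simp only [pow_succ] at h
    have h' : 2^a + 2^b' = 2^c' + 2^d' := by omega
    rcases ih b' c' d' h' with ⟨h1, h2⟩ | ⟨h1, h2⟩
    · left; omega
    · right; omega

set_option maxHeartbeats 800000 in
theorem stmt_1 (p n k m : ℕ) (hp : p.Prime) (hp7 : 7 ≤ p) (hn : 2 ≤ n)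
    (hkodd : Odd k) (hk3 : 3 ≤ k) (hk2 : k ≤ (p - 1) / 2)
    (hm : 2 ^ n + 1 < p ^ (m - 2))
    (K : ℕ → ℤ) (hK : ∀ i, K i = 2 ^ i * p + (if Even i then (k : ℤ) else 0)) :
    (∀ i j : ℕ, 1 ≤ i → i < j → j ≤ n →
      ¬ (K i ≡ K j [ZMOD (p : ℤ) ^ (m - 1) * ((p : ℤ) - 1)])) ∧
    (∀ i j s t : ℕ, 1 ≤ i → i ≤ n → 1 ≤ j → j ≤ n → 1 ≤ s → s ≤ n → 1 ≤ t → t ≤ n →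
      i ≠ j → s ≠ t → (i, j) ≠ (s, t) →
      ¬ (K i - K j ≡ K s - K t [ZMOD (p : ℤ) ^ (m - 1) * ((p : ℤ) - 1)])) := by
  have h2n1 : 1 ≤ 2 ^ n := Nat.one_le_two_pow
  have hm3 : 3 ≤ m := by
    by_contra hlt
    have : m - 2 = 0 := by omega
    rw [this, pow_zero] at hm
    omega
  set P : ℤ := (p : ℤ) with hPdef
  have hP7 : (7 : ℤ) ≤ P := by rw [hPdef]; exact_mod_cast hp7
  have hk2' : 2 * (k : ℤ) ≤ P - 1 := by
    have h2k : 2 * k ≤ p - 1 := by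
      have := (Nat.le_div_iff_mul_le (by norm_num : 0 < 2)).mp hk2
      omega
    rw [hPdef]; omega
  have hkI : (0 : ℤ) ≤ (k : ℤ) := Int.ofNat_nonneg k
  have hpow : (2 : ℤ) ^ n + 2 ≤ P ^ (m - 2) := by
    have h1 : 2 ^ n + 2 ≤ p ^ (m - 2) := by omega
    calc (2 : ℤ) ^ n + 2 = ((2 ^ n + 2 : ℕ) : ℤ) := by push_cast; ring
    _ ≤ ((p ^ (m - 2) : ℕ) : ℤ) := by exact_mod_cast h1
    _ = P ^ (m - 2) := by rw [hPdef]; push_cast; ring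
  set M : ℤ := P ^ (m - 1) * (P - 1) with hMdef
  have h2npos : (0 : ℤ) < 2 ^ n := pow_pos (by norm_num) n
  have hMge : ((2 : ℤ) ^ n + 2) * P * 6 ≤ M := by
    have h1 : P ^ (m - 1) = P ^ (m - 2) * P := by
      rw [← pow_succ]
      congr 1
      omega
    rw [hMdef, h1]
    have hA : ((2 : ℤ) ^ n + 2) * (P * (P - 1)) ≤ P ^ (m - 2) * (P * (P - 1)) :=
      mul_le_mul_of_nonneg_right hpow (mul_nonneg (by linarith) (by linarith))
    linarith [hA, mul_nonneg (mul_nonneg (by linarith : (0:ℤ) ≤ 2 ^ n + 2)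
      (by linarith : (0:ℤ) ≤ P)) (by linarith : (0:ℤ) ≤ P - 7)]
  have hEb : ∀ i : ℕ, 0 ≤ (if Even i then (k : ℤ) else 0) ∧
      (if Even i then (k : ℤ) else 0) ≤ (k : ℤ) := by
    intro i
    by_cases h : Even i <;> simp [h, hkI]
  have hMpos : (0 : ℤ) < M := mul_pos (pow_pos (by linarith) (m - 1)) (by linarith)
  constructor
  · intro i j h1i hij hjn hcon
    have hdvd : M ∣ K j - K i := hcon.dvd
    have h2i : (2 : ℤ) ≤ 2 ^ i := by
      calc (2 : ℤ) = 2 ^ 1 := (pow_one 2).symm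
      _ ≤ 2 ^ i := pow_le_pow_right₀ (by norm_num) h1i
    have h2ij : 2 ^ i * 2 ≤ (2 : ℤ) ^ j := by
      calc (2 : ℤ) ^ i * 2 = 2 ^ (i + 1) := (pow_succ 2 i).symm
      _ ≤ 2 ^ j := pow_le_pow_right₀ (by norm_num) (by omega)
    have h2jn : (2 : ℤ) ^ j ≤ 2 ^ n := pow_le_pow_right₀ (by norm_num) hjn
    obtain ⟨hEi0, hEik⟩ := hEb i
    obtain ⟨hEj0, hEjk⟩ := hEb j
    have hd : K j - K i = ((2 : ℤ) ^ j - 2 ^ i) * P +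
        ((if Even j then (k : ℤ) else 0) - (if Even i then (k : ℤ) else 0)) := by
      rw [hK, hK]; ring
    have hmul1 : 2 * P ≤ ((2 : ℤ) ^ j - 2 ^ i) * P :=
      mul_le_mul_of_nonneg_right (by linarith) (by linarith)
    have hmul2 : ((2 : ℤ) ^ j - 2 ^ i) * P ≤ 2 ^ n * P :=
      mul_le_mul_of_nonneg_right (by linarith) (by linarith)
    have hAP : (0 : ℤ) < 2 ^ n * P := mul_pos h2npos (by linarith)
    have hdpos : 0 < K j - K i := by rw [hd]; linarith
    have hdlt : K j - K i < M := by rw [hd]; linarith [hMge]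
    have := Int.le_of_dvd hdpos hdvd
    omega
  · intro i j s t h1i hin h1j hjn h1s hsn h1t htn hij hst hne hcon
    have hdvd : M ∣ (K s - K t) - (K i - K j) := hcon.dvd
    set c : ℤ := 2 ^ s + 2 ^ j - 2 ^ t - 2 ^ i with hcdef
    set e : ℤ := ((if Even s then (k : ℤ) else 0) - (if Even t then (k : ℤ) else 0))
      - ((if Even i then (k : ℤ) else 0) - (if Even j then (k : ℤ) else 0)) with hedef
    have hd : (K s - K t) - (K i - K j) = c * P + e := by
      rw [hK, hK, hK, hK, hcdef, hedef]; ring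
    have hcne : c ≠ 0 := by
      intro hc0
      have hnat : (2 : ℤ) ^ s + 2 ^ j = 2 ^ t + 2 ^ i := by
        rw [hcdef] at hc0; linarith
      have hnat' : 2 ^ s + 2 ^ j = 2 ^ t + 2 ^ i := by exact_mod_cast hnat
      rcases pow2_add_pow2 s j t i hnat' with ⟨h1, h2⟩ | ⟨h1, h2⟩
      · exact hst (by omega)
      · exact hne (by rw [Prod.mk.injEq]; omega)
    obtain ⟨hEi0, hEik⟩ := hEb i
    obtain ⟨hEj0, hEjk⟩ := hEb j
    obtain ⟨hEs0, hEsk⟩ := hEb s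
    obtain ⟨hEt0, hEtk⟩ := hEb t
    have hebd1 : -(P - 1) ≤ e := by rw [hedef]; linarith
    have hebd2 : e ≤ P - 1 := by rw [hedef]; linarith
    have h2in : (2 : ℤ) ^ i ≤ 2 ^ n := pow_le_pow_right₀ (by norm_num) hin
    have h2jn : (2 : ℤ) ^ j ≤ 2 ^ n := pow_le_pow_right₀ (by norm_num) hjn
    have h2sn : (2 : ℤ) ^ s ≤ 2 ^ n := pow_le_pow_right₀ (by norm_num) hsn
    have h2tn : (2 : ℤ) ^ t ≤ 2 ^ n := pow_le_pow_right₀ (by norm_num) htn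
    have h2ip : (0 : ℤ) < 2 ^ i := pow_pos (by norm_num) i
    have h2jp : (0 : ℤ) < 2 ^ j := pow_pos (by norm_num) j
    have h2sp : (0 : ℤ) < 2 ^ s := pow_pos (by norm_num) s
    have h2tp : (0 : ℤ) < 2 ^ t := pow_pos (by norm_num) t
    have hcbd1 : -(2 * 2 ^ n) ≤ c := by rw [hcdef]; linarith
    have hcbd2 : c ≤ 2 * 2 ^ n := by rw [hcdef]; linarith
    have hAP : (0 : ℤ) < 2 ^ n * P := mul_pos h2npos (by linarith)
    rcases hcne.lt_or_gt with hc | hc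
    · have hc1 : c ≤ -1 := by omega
      have hmul1 : c * P ≤ -1 * P := mul_le_mul_of_nonneg_right hc1 (by linarith)
      have hmul2 : -(2 * 2 ^ n) * P ≤ c * P := mul_le_mul_of_nonneg_right hcbd1 (by linarith)
      have hdneg : c * P + e ≤ -1 := by linarith
      have hdgt : -M < c * P + e := by linarith [hMge]
      have hdvd' : M ∣ -((K s - K t) - (K i - K j)) := Dvd.dvd.neg_right hdvd
      rw [hd] at hdvd'
      have := Int.le_of_dvd (by omega) hdvd'
      omega
    · have hc1 : 1 ≤ c := by omega
      have hmul1 : 1 * P ≤ c * P := mul_le_mul_of_nonneg_right hc1 (by linarith)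
      have hmul2 : c * P ≤ 2 * 2 ^ n * P := mul_le_mul_of_nonneg_right hcbd2 (by linarith)
      have hdpos : 1 ≤ c * P + e := by linarith
      have hdlt : c * P + e < M := by linarith [hMge]
      rw [hd] at hdvd
      have := Int.le_of_dvd (by omega) hdvd
      omega
end

section
/- Let S and R be commutative rings, π : S → R a surjective ring homomorphism whose kernel I satisfies I² = 0 and I = (t) for some t ∈ S, and n ≥ 1. Let π* : GL_n(S) → GL_n(R) be the induced map on invertible matrices. Then: (i) for every A ∈ M_n(S), the matrix 1 + t·A is invertible with inverse 1 − t·A, and it lies in ker π*; (ii) (1 + t·A)(1 + t·B) = 1 + t·(A + B) for all A, B ∈ M_n(S), so the map A ↦ 1 + t·A is a group homomorphism from (M_n(S), +) to ker π*; (iii) every element of ker π* has the form 1 + t·A for some A ∈ M_n(S); in particular ker π* is an abelian group. -/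
/-!
Since `t² = 0`, the product `(t • A) * (t • B)` vanishes, so
`(1 + t • A) * (1 + t • B) = 1 + t • (A + B)`: the matrices `1 + t • A` form a group isomorphic to `(Mₙ(S), +)`, in particular an abelian one.
Conversely, if `π*(u) = 1` then every entry of `u - 1` lies in `ker π = (t)`, so `u - 1 = t • A`.
-/

namespace Matrix

variable {m S : Type*} [Fintype m] [CommRing S] {t : S}

theorem smul_mul_smul_of_mul_self_eq_zero (ht : t * t = 0) (A B : Matrix m m S) :
    (t • A) * (t • B) = 0 := by
  rw [smul_mul, Matrix.mul_smul, smul_smul, ht, zero_smul]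

variable [DecidableEq m]

theorem one_add_smul_mul_one_add_smul (ht : t * t = 0) (A B : Matrix m m S) :
    (1 + t • A) * (1 + t • B) = 1 + t • (A + B) := by
  rw [add_mul, one_mul, mul_add, mul_one, smul_mul_smul_of_mul_self_eq_zero ht, add_zero, smul_add]
  abel

theorem one_add_smul_mul_one_sub_smul (ht : t * t = 0) (A : Matrix m m S) :
    (1 + t • A) * (1 - t • A) = 1 := by
  rw [sub_eq_add_neg, ← smul_neg, one_add_smul_mul_one_add_smul ht, add_neg_cancel, smul_zero,
    add_zero]

theorem one_sub_smul_mul_one_add_smul (ht : t * t = 0) (A : Matrix m m S) :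
    (1 - t • A) * (1 + t • A) = 1 := by
  rw [sub_eq_add_neg, ← smul_neg, one_add_smul_mul_one_add_smul ht, neg_add_cancel, smul_zero,
    add_zero]

variable {R : Type*} [CommRing R] {π : S →+* R}

theorem mapMatrix_one_add_smul (hπt : π t = 0) (A : Matrix m m S) :
    π.mapMatrix (1 + t • A) = 1 := by
  rw [map_add, map_one, RingHom.mapMatrix_apply, map_smul' _ _ _ (map_mul π), hπt, zero_smul,
    add_zero]

theorem exists_eq_one_add_smul_of_mapMatrix_eq_one (hker : RingHom.ker π = Ideal.span {t})
    {M : Matrix m m S} (hM : π.mapMatrix M = 1) : ∃ A : Matrix m m S, M = 1 + t • A := by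
  have hsub : π.mapMatrix (M - 1) = 0 := by rw [map_sub, hM, map_one, sub_self]
  have hmem : ∀ i j, (M - 1) i j ∈ Ideal.span {t} := fun i j =>
    hker ▸ congrFun (congrFun hsub i) j
  choose A hA using fun i j => Ideal.mem_span_singleton'.mp (hmem i j)
  refine ⟨of A, ?_⟩
  rw [← sub_eq_iff_eq_add']
  ext i j
  rw [← hA, smul_apply, of_apply, smul_eq_mul, mul_comm]

end Matrix

theorem Ideal.mul_self_eq_zero_of_sq_eq_bot {S : Type*} [CommRing S] {I : Ideal S}
    (hI : I ^ 2 = ⊥) {t : S} (ht : t ∈ I) : t * t = 0 := by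
  have : t * t ∈ I ^ 2 := pow_two I ▸ Ideal.mul_mem_mul ht ht
  rwa [hI, Ideal.mem_bot] at this

open Matrix in
theorem stmt_2_general {S R : Type*} [CommRing S] [CommRing R] (π : S →+* R)
    (t : S)
    (hker : RingHom.ker π = Ideal.span {t})
    (hsq : (RingHom.ker π) ^ 2 = ⊥)
    (n : ℕ) :
    (∀ A : Matrix (Fin n) (Fin n) S,
      (1 + t • A) * (1 - t • A) = 1 ∧ (1 - t • A) * (1 + t • A) = 1 ∧
      π.mapMatrix (1 + t • A) = 1) ∧
    (∀ A B : Matrix (Fin n) (Fin n) S,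
      (1 + t • A) * (1 + t • B) = 1 + t • (A + B)) ∧
    (∀ u : Matrix.GeneralLinearGroup (Fin n) S,
      Units.map π.mapMatrix.toMonoidHom u = 1 →
      ∃ A : Matrix (Fin n) (Fin n) S, (u : Matrix (Fin n) (Fin n) S) = 1 + t • A) ∧
    (∀ u v : Matrix.GeneralLinearGroup (Fin n) S,
      Units.map π.mapMatrix.toMonoidHom u = 1 → Units.map π.mapMatrix.toMonoidHom v = 1 →
      u * v = v * u) := by
  have htker : t ∈ RingHom.ker π := hker ▸ Ideal.mem_span_singleton_self t
  have ht : t * t = 0 := Ideal.mul_self_eq_zero_of_sq_eq_bot hsq htker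
  have hkernel : ∀ u : GeneralLinearGroup (Fin n) S, Units.map π.mapMatrix.toMonoidHom u = 1 →
      ∃ A, (u : Matrix (Fin n) (Fin n) S) = 1 + t • A := fun u hu =>
    exists_eq_one_add_smul_of_mapMatrix_eq_one hker (congrArg Units.val hu)
  refine ⟨fun A => ⟨one_add_smul_mul_one_sub_smul ht A, one_sub_smul_mul_one_add_smul ht A,
    mapMatrix_one_add_smul htker A⟩, one_add_smul_mul_one_add_smul ht, hkernel, ?_⟩
  intro u v hu hv
  obtain ⟨A, hA⟩ := hkernel u hu
  obtain ⟨B, hB⟩ := hkernel v hv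
  ext : 1
  rw [Units.val_mul, Units.val_mul, hA, hB, one_add_smul_mul_one_add_smul ht,
    one_add_smul_mul_one_add_smul ht, add_comm A]

theorem stmt_2 {S R : Type*} [CommRing S] [CommRing R] (π : S →+* R)
    (hsurj : Function.Surjective π) (t : S)
    (hker : RingHom.ker π = Ideal.span {t})
    (hsq : (RingHom.ker π) ^ 2 = ⊥)
    (n : ℕ) (hn : 1 ≤ n) :
    (∀ A : Matrix (Fin n) (Fin n) S,
      (1 + t • A) * (1 - t • A) = 1 ∧ (1 - t • A) * (1 + t • A) = 1 ∧
      π.mapMatrix (1 + t • A) = 1) ∧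
    (∀ A B : Matrix (Fin n) (Fin n) S,
      (1 + t • A) * (1 + t • B) = 1 + t • (A + B)) ∧
    (∀ u : Matrix.GeneralLinearGroup (Fin n) S,
      Units.map π.mapMatrix.toMonoidHom u = 1 →
      ∃ A : Matrix (Fin n) (Fin n) S, (u : Matrix (Fin n) (Fin n) S) = 1 + t • A) ∧
    (∀ u v : Matrix.GeneralLinearGroup (Fin n) S,
      Units.map π.mapMatrix.toMonoidHom u = 1 → Units.map π.mapMatrix.toMonoidHom v = 1 →
      u * v = v * u) :=
  stmt_2_general π t hker hsq n
end

section
/- Let S be a commutative ring, t ∈ S an element with t² = 0, G a group, ρ̃ : G → GL_n(S) a group homomorphism, and F : G → M_n(S) a function satisfying the cocycle relation t·F(g h) = t·F(g) + t·ρ̃(g) F(h) ρ̃(g)^{−1} for all g, h ∈ G. Then for each g ∈ G the matrix 1 + t·F(g) is invertible, and the map g ↦ (1 + t·F(g))·ρ̃(g) is a group homomorphism from G to GL_n(S). -/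
theorem stmt_4 {S : Type*} [CommRing S] (t : S) (ht : t ^ 2 = 0) (n : ℕ)
    {G : Type*} [Group G] (ρ : G →* Matrix.GeneralLinearGroup (Fin n) S)
    (F : G → Matrix (Fin n) (Fin n) S)
    (hF : ∀ g h : G, t • F (g * h) =
      t • F g + t • ((ρ g).val * F h * ((ρ g)⁻¹).val)) :
    (∀ g : G, IsUnit ((1 + t • F g : Matrix (Fin n) (Fin n) S))) ∧
    ∃ τ : G →* Matrix.GeneralLinearGroup (Fin n) S,
      ∀ g : G, (τ g).val = (1 + t • F g) * (ρ g).val := by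
  have hnil : ∀ A B : Matrix (Fin n) (Fin n) S, (t • A) * (t • B) = 0 := by
    intro A B
    rw [smul_mul_smul, ← sq, ht, zero_smul]
  have hinv1 : ∀ g : G, (1 + t • F g) * (1 - t • F g) = 1 := by
    intro g
    have h := hnil (F g) (F g)
    rw [add_mul, one_mul, mul_sub, mul_one, h]; abel
  have hinv2 : ∀ g : G, (1 - t • F g) * (1 + t • F g) = 1 := by
    intro g
    have h := hnil (F g) (F g)
    rw [sub_mul, one_mul, mul_add, mul_one, h]; abel
  have hPP' : ∀ g : G, (ρ g).val * ((ρ g)⁻¹).val = 1 := fun g => (ρ g).mul_inv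
  have hP'P : ∀ g : G, ((ρ g)⁻¹).val * (ρ g).val = 1 := fun g => (ρ g).inv_mul
  refine ⟨fun g => ⟨⟨1 + t • F g, 1 - t • F g, hinv1 g, hinv2 g⟩, rfl⟩, ?_⟩
  -- t • F 1 = 0
  have hF1 : t • F (1 : G) = 0 := by
    have h := hF 1 1
    simp only [mul_one, map_one, inv_one, Units.val_one, one_mul] at h
    have := h.symm
    rwa [add_eq_left] at this
  refine ⟨{
    toFun := fun g => ⟨(1 + t • F g) * (ρ g).val,
      ((ρ g)⁻¹).val * (1 - t • F g), ?_, ?_⟩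
    map_one' := ?_
    map_mul' := ?_ }, fun g => rfl⟩
  · calc (1 + t • F g) * (ρ g).val * (((ρ g)⁻¹).val * (1 - t • F g))
        = (1 + t • F g) * ((ρ g).val * ((ρ g)⁻¹).val) * (1 - t • F g) := by
          noncomm_ring
      _ = 1 := by rw [hPP' g, mul_one, hinv1 g]
  · calc ((ρ g)⁻¹).val * (1 - t • F g) * ((1 + t • F g) * (ρ g).val)
        = ((ρ g)⁻¹).val * ((1 - t • F g) * (1 + t • F g)) * (ρ g).val := by
          noncomm_ring
      _ = 1 := by rw [hinv2 g, mul_one, hP'P g]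
  · apply Units.ext
    show (1 + t • F (1 : G)) * (ρ (1 : G)).val = 1
    rw [hF1, add_zero, map_one, Units.val_one, one_mul]
  · intro g h
    apply Units.ext
    show (1 + t • F (g * h)) * (ρ (g * h)).val
      = (1 + t • F g) * (ρ g).val * ((1 + t • F h) * (ρ h).val)
    have hρ : (ρ (g * h)).val = (ρ g).val * (ρ h).val := by
      rw [map_mul, Units.val_mul]
    set A := t • F g
    set B := t • F h
    set P := (ρ g).val
    set Q := (ρ h).val
    set P' := ((ρ g)⁻¹).val
    have hAB : A * (P * B) = 0 := by
      have : A * (P * B) = (t • F g) * (t • (P * F h)) := by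
        simp [A, B, mul_smul_comm]
      rw [this, hnil]
    have hco : t • F (g * h) = A + P * B * P' := by
      have h2 : P * B * P' = t • (P * F h * P') := by
        rw [mul_smul_comm, smul_mul_assoc]
      rw [hF g h, h2]
    rw [hρ, hco]
    calc (1 + (A + P * B * P')) * (P * Q)
        = P * Q + A * (P * Q) + P * B * (P' * P) * Q := by noncomm_ring
      _ = P * Q + A * (P * Q) + P * B * Q + A * (P * B) * Q := by
          rw [hP'P g, mul_one, hAB, zero_mul, add_zero]
      _ = (1 + A) * P * ((1 + B) * Q) := by noncomm_ring
end

section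
/- Let S be a commutative ring, t ∈ S an element with t² = 0, G a group, ρ̃ : G → GL_n(S) a group homomorphism, x ∈ M_n(S), and F₁, F₂ : G → M_n(S) functions such that t·F₂(h) = t·F₁(h) + t·(x − ρ̃(h) x ρ̃(h)^{−1}) for all h ∈ G. Then for all h ∈ G, (1 + t·F₂(h))·ρ̃(h) = (1 + t·x)·(1 + t·F₁(h))·ρ̃(h)·(1 + t·x)^{−1}. -/
theorem stmt_5 {S : Type*} [CommRing S] (t : S) (ht : t ^ 2 = 0) (n : ℕ)
    {G : Type*} [Group G] (ρ : G →* Matrix.GeneralLinearGroup (Fin n) S)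
    (x : Matrix (Fin n) (Fin n) S) (F₁ F₂ : G → Matrix (Fin n) (Fin n) S)
    (hF : ∀ h : G, t • F₂ h = t • F₁ h + t • (x - (ρ h).val * x * ((ρ h)⁻¹).val)) :
    IsUnit ((1 + t • x : Matrix (Fin n) (Fin n) S)) ∧
    ∀ h : G, (1 + t • F₂ h) * (ρ h).val =
      (1 + t • x) * ((1 + t • F₁ h) * (ρ h).val) * Ring.inverse (1 + t • x) := by
  have ht' : t * t = 0 := by rw [← sq]; exact ht
  have hsq : ∀ a b : Matrix (Fin n) (Fin n) S, (t • a) * (t • b) = 0 := by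
    intro a b
    rw [smul_mul_assoc, mul_smul_comm, smul_smul, ht', zero_smul]
  have h1 : (1 + t • x) * (1 - t • x) = 1 := by
    rw [mul_sub, mul_one, add_mul, one_mul, hsq, add_zero, add_sub_cancel_right]
  have h2 : (1 - t • x) * (1 + t • x) = 1 := by
    rw [sub_mul, one_mul, mul_add, mul_one, hsq, add_zero, add_sub_cancel_right]
  set u : (Matrix (Fin n) (Fin n) S)ˣ := ⟨1 + t • x, 1 - t • x, h1, h2⟩ with hu
  have hunit : IsUnit ((1 + t • x : Matrix (Fin n) (Fin n) S)) := ⟨u, rfl⟩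
  refine ⟨hunit, fun h => ?_⟩
  have hinvR : Ring.inverse ((1 + t • x : Matrix (Fin n) (Fin n) S)) = 1 - t • x := by
    have : Ring.inverse (u : Matrix (Fin n) (Fin n) S) = ↑u⁻¹ := Ring.inverse_unit u
    simpa [hu] using this
  rw [hinvR]
  have hinv : ((ρ h)⁻¹).val * (ρ h).val = 1 := (ρ h).inv_mul
  rw [add_mul, one_mul, hF h]
  have expand : (1 + t • x) * ((1 + t • F₁ h) * (ρ h).val) * (1 - t • x)
      = (ρ h).val + (t • F₁ h) * (ρ h).val + (t • x) * (ρ h).val - (ρ h).val * (t • x)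
        + ((t • x) * ((t • F₁ h) * (ρ h).val)
          - (t • F₁ h) * ((ρ h).val * (t • x))
          - (t • x) * ((t • F₁ h) * ((ρ h).val * (t • x)))
          - (t • x) * ((ρ h).val * (t • x))) := by
    noncomm_ring
    simp only [smul_add, smul_smul]
    abel
  rw [expand]
  have z1 : (t • x) * ((t • F₁ h) * (ρ h).val) = 0 := by
    rw [← mul_assoc, hsq, zero_mul]
  have e : (ρ h).val * (t • x) = t • ((ρ h).val * x) := mul_smul_comm t _ x
  have z2 : (t • F₁ h) * ((ρ h).val * (t • x)) = 0 := by
    rw [e, hsq]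
  have z3 : (t • x) * ((t • F₁ h) * ((ρ h).val * (t • x))) = 0 := by
    rw [z2, mul_zero]
  have z4 : (t • x) * ((ρ h).val * (t • x)) = 0 := by
    rw [e, hsq]
  rw [z3, z1, z2, z4]
  have key : t • (x - (ρ h).val * x * ((ρ h)⁻¹).val) * (ρ h).val
      = (t • x) * (ρ h).val - (ρ h).val * (t • x) := by
    rw [smul_sub, sub_mul, smul_mul_assoc, smul_mul_assoc,
      mul_assoc ((ρ h).val * x), hinv, mul_one, mul_smul_comm]
  rw [add_mul, key]
  simp only [mul_zero, sub_zero, sub_self, zero_sub, add_zero]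
  abel
end

section
/- Let p be a prime, n ≥ 2, m ≥ 1, and M = m(n²−n)+1. Let G be a group and γ₁, …, γ_n : G → (ℤ/p^Mℤ)ˣ homomorphisms; for i ≠ j set γ_{i,j} := γ_i γ_j^{−1}. Assume: for each pair i ≠ j there exists g ∈ G with γ_{i,j}(g) − 1 not divisible by p^m in ℤ/p^Mℤ, and for any two distinct pairs (i,j) ≠ (s,t) with i ≠ j, s ≠ t there exists g ∈ G with γ_{s,t}(g) − γ_{i,j}(g) not divisible by p^m. Let D(g) := diag(γ₁(g), …, γ_n(g)) ∈ GL_n(ℤ/p^Mℤ) and let ℳ ⊆ M_n(ℤ/p^Mℤ) be a ℤ/p^Mℤ-submodule with D(g)·ℳ·D(g)^{−1} ⊆ ℳ for all g ∈ G. Then for every x ∈ ℳ, writing x₀ for the diagonal matrix whose diagonal entries agree with those of x, one has p^{m(n²−n)}·x₀ ∈ ℳ. -/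
/-!
If `D` is a diagonal matrix with entries `d s`, conjugation by `D` multiplies the `(s, t)` entry
by `d s / d t`: it fixes the diagonal and scales the `(i, j)` entry by `a = γ_{i,j}(g)`. Hence
`D y D⁻¹ - a • y` has a zero `(i, j)` entry, keeps every entry of `y` that was already zero, and
has diagonal `(1 - a) • y.diag`. In `ZMod (p ^ M)` divisibility by powers of `p` is total, so
`1 - a` divides `p ^ m` as soon as `p ^ m` does not divide it, and a multiple of
`D y D⁻¹ - a • y` has diagonal `p ^ m • y.diag`. Repeating this for each of the `n² - n`
off-diagonal positions leaves `p ^ (m (n² - n))` times the diagonal part of `x` inside `ℳ`.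
-/

open Matrix Finset

theorem ZMod.dvd_pow_or_pow_dvd {p M : ℕ} (hp : p.Prime) (y : ZMod (p ^ M)) (m : ℕ) :
    y ∣ (p : ZMod (p ^ M)) ^ m ∨ (p : ZMod (p ^ M)) ^ m ∣ y := by
  have : NeZero (p ^ M) := ⟨pow_ne_zero M hp.ne_zero⟩
  obtain ⟨k, -, hk⟩ := (Nat.dvd_prime_pow hp).1 (Nat.gcd_dvd_right y.val (p ^ M))
  -- `ZMod`'s `⁻¹` is defined on non-units too, with `y * y⁻¹ = gcd y.val (p ^ M)`.
  have dvd_pow : y ∣ (p : ZMod (p ^ M)) ^ k :=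
    ⟨y⁻¹, by rw [ZMod.mul_inv_eq_gcd, hk, Nat.cast_pow]⟩
  have pow_dvd : (p : ZMod (p ^ M)) ^ k ∣ y := by
    rw [← ZMod.natCast_zmod_val y, ← Nat.cast_pow, ← hk]
    exact Nat.cast_dvd_cast (Nat.gcd_dvd_left _ _)
  rcases le_total k m with h | h
  · exact .inl (dvd_pow.trans (pow_dvd_pow _ h))
  · exact .inr ((pow_dvd_pow _ h).trans pow_dvd)

theorem Matrix.diagonal_mul_mul_diagonal {m n R : Type*} [Fintype m] [Fintype n]
    [DecidableEq m] [DecidableEq n] [CommSemiring R] (d : m → R) (x : Matrix m n R) (e : n → R) :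
    diagonal d * x * diagonal e = vecMulVec d e ⊙ x := by
  ext s t
  simp only [mul_diagonal, diagonal_mul, hadamard_apply, vecMulVec_apply]
  ring

section DiagonalPart

variable {ι R : Type*} [Fintype ι] [DecidableEq ι] [CommRing R]
  {ℳ : Submodule R (Matrix ι ι R)} {r : R}

theorem exists_mem_diag_eq_smul_of_subset_offDiag
    (hℳ : ∀ i j, i ≠ j → ∃ w : Matrix ι ι R,
      (∀ s, w s s = 1) ∧ (∀ y ∈ ℳ, w ⊙ y ∈ ℳ) ∧ 1 - w i j ∣ r)
    {x : Matrix ι ι R} (hx : x ∈ ℳ) (S : Finset (ι × ι)) (hS : S ⊆ univ.offDiag) :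
    ∃ y ∈ ℳ, y.diag = r ^ #S • x.diag ∧ ∀ q ∈ S, y q.1 q.2 = 0 := by
  induction S using Finset.induction_on with
  | empty => exact ⟨x, hx, by simp, by simp⟩
  | insert q S hqS ih =>
    obtain ⟨y, hyℳ, hy_diag, hy_zero⟩ := ih ((subset_insert q S).trans hS)
    have hq : q.1 ≠ q.2 := (mem_offDiag.1 (hS (mem_insert_self q S))).2.2
    obtain ⟨w, hw_diag, hwℳ, c, hc⟩ := hℳ q.1 q.2 hq
    have entry : ∀ s t, (c • (w ⊙ y - w q.1 q.2 • y)) s t = c * (w s t - w q.1 q.2) * y s t :=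
      fun s t => by simp only [Matrix.smul_apply, Matrix.sub_apply, hadamard_apply, smul_eq_mul]; ring
    refine ⟨c • (w ⊙ y - w q.1 q.2 • y), ℳ.smul_mem c (ℳ.sub_mem (hwℳ y hyℳ) (ℳ.smul_mem _ hyℳ)),
      ?_, ?_⟩
    · ext s
      have hys := congrFun hy_diag s
      simp only [diag_apply, Pi.smul_apply, smul_eq_mul] at hys ⊢
      rw [entry, hw_diag, hys, card_insert_of_notMem hqS, hc, pow_succ]
      ring
    · intro q' hq'
      rcases mem_insert.1 hq' with rfl | hq'S
      · rw [entry, sub_self, mul_zero, zero_mul]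
      · rw [entry, hy_zero q' hq'S, mul_zero]

theorem pow_card_offDiag_smul_diagonal_diag_mem
    (hℳ : ∀ i j, i ≠ j → ∃ w : Matrix ι ι R,
      (∀ s, w s s = 1) ∧ (∀ y ∈ ℳ, w ⊙ y ∈ ℳ) ∧ 1 - w i j ∣ r)
    {x : Matrix ι ι R} (hx : x ∈ ℳ) :
    r ^ #(univ : Finset ι).offDiag • diagonal x.diag ∈ ℳ := by
  obtain ⟨y, hyℳ, hy_diag, hy_zero⟩ :=
    exists_mem_diag_eq_smul_of_subset_offDiag hℳ hx _ subset_rfl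
  convert hyℳ using 1
  ext s t
  rcases eq_or_ne s t with rfl | hst
  · simpa using (congrFun hy_diag s).symm
  · simp [diagonal_apply_ne _ hst, hy_zero (s, t) (by simpa using hst)]

end DiagonalPart

theorem stmt_8_general (p n m M : ℕ) (hp : p.Prime)
    {G : Type*} [Group G] (γ : Fin n → G →* (ZMod (p ^ M))ˣ)
    (hnontriv : ∀ i j : Fin n, i ≠ j → ∃ g : G,
      ¬ ((p : ZMod (p ^ M)) ^ m ∣
        ((γ i g : ZMod (p ^ M)) * (((γ j g)⁻¹ : (ZMod (p ^ M))ˣ) : ZMod (p ^ M)) - 1)))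
    (ℳ : Submodule (ZMod (p ^ M)) (Matrix (Fin n) (Fin n) (ZMod (p ^ M))))
    (hstab : ∀ g : G, ∀ x ∈ ℳ,
      Matrix.diagonal (fun i => (γ i g : ZMod (p ^ M))) * x *
      Matrix.diagonal (fun i => (((γ i g)⁻¹ : (ZMod (p ^ M))ˣ) : ZMod (p ^ M))) ∈ ℳ)
    (x : Matrix (Fin n) (Fin n) (ZMod (p ^ M))) (hx : x ∈ ℳ) :
    ((p : ZMod (p ^ M)) ^ (m * (n ^ 2 - n))) •
      Matrix.diagonal (fun i => x i i) ∈ ℳ := by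
  suffices h : ((p : ZMod (p ^ M)) ^ m) ^ #(univ : Finset (Fin n)).offDiag • diagonal x.diag ∈ ℳ by
    rwa [offDiag_card, card_univ, Fintype.card_fin, ← sq, ← pow_mul] at h
  refine pow_card_offDiag_smul_diagonal_diag_mem (fun i j hij => ?_) hx
  obtain ⟨g, hg⟩ := hnontriv i j hij
  refine ⟨vecMulVec (fun s => (γ s g : ZMod (p ^ M))) (fun t => ((γ t g)⁻¹ : (ZMod (p ^ M))ˣ)),
    fun s => by simp [vecMulVec_apply], fun y hy => ?_, ?_⟩
  · rw [← diagonal_mul_mul_diagonal]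
    exact hstab g y hy
  · rw [vecMulVec_apply, ← neg_sub, neg_dvd]
    exact (ZMod.dvd_pow_or_pow_dvd hp _ m).resolve_right hg

theorem stmt_8 (p n m M : ℕ) (hp : p.Prime) (hn : 2 ≤ n) (hm : 1 ≤ m)
    (hM : M = m * (n ^ 2 - n) + 1)
    {G : Type*} [Group G] (γ : Fin n → G →* (ZMod (p ^ M))ˣ)
    (hnontriv : ∀ i j : Fin n, i ≠ j → ∃ g : G,
      ¬ ((p : ZMod (p ^ M)) ^ m ∣
        ((γ i g : ZMod (p ^ M)) * (((γ j g)⁻¹ : (ZMod (p ^ M))ˣ) : ZMod (p ^ M)) - 1)))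
    (hdist : ∀ i j s t : Fin n, i ≠ j → s ≠ t → (i, j) ≠ (s, t) → ∃ g : G,
      ¬ ((p : ZMod (p ^ M)) ^ m ∣
        ((γ s g : ZMod (p ^ M)) * (((γ t g)⁻¹ : (ZMod (p ^ M))ˣ) : ZMod (p ^ M)) -
         (γ i g : ZMod (p ^ M)) * (((γ j g)⁻¹ : (ZMod (p ^ M))ˣ) : ZMod (p ^ M)))))
    (ℳ : Submodule (ZMod (p ^ M)) (Matrix (Fin n) (Fin n) (ZMod (p ^ M))))
    (hstab : ∀ g : G, ∀ x ∈ ℳ,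
      Matrix.diagonal (fun i => (γ i g : ZMod (p ^ M))) * x *
      Matrix.diagonal (fun i => (((γ i g)⁻¹ : (ZMod (p ^ M))ˣ) : ZMod (p ^ M))) ∈ ℳ)
    (x : Matrix (Fin n) (Fin n) (ZMod (p ^ M))) (hx : x ∈ ℳ) :
    ((p : ZMod (p ^ M)) ^ (m * (n ^ 2 - n))) •
      Matrix.diagonal (fun i => x i i) ∈ ℳ :=
  stmt_8_general p n m M hp γ hnontriv ℳ hstab x hx
end

section
/- Let p be a prime, n ≥ 1, G a group, ρ : G → GL_n(ℤ_p) a group homomorphism with mod-p reduction ρ̄ : G → GL_n(𝔽_p), and i ≥ 1 an integer. Then Φ_i(ρ) is an additive subgroup of M_n(𝔽_p), and it is stable under the adjoint action: for every g ∈ G and A ∈ Φ_i(ρ), the matrix ρ̄(g)·A·ρ̄(g)^{−1} belongs to Φ_i(ρ). -/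
/-! If `ρ g = 1 + c • B` and `ρ h = 1 + c • B'`, then `ρ (g h) = 1 + c • (B + B' + c • B B')`,
`ρ g⁻¹ = 1 + c • (-B ρ g⁻¹)` and `ρ (x g x⁻¹) = 1 + c • (ρ x B ρ x⁻¹)`. Applying a ring homomorphism
that kills `c`, the correction terms vanish and `ρ g⁻¹ ≡ 1`, which gives closure under addition,
negation and the adjoint action. -/

/-- `Φ_i(ρ)`: the set of matrices `A ∈ M_n(𝔽_p)` such that there exist `g ∈ G` and
`B ∈ M_n(ℤ_p)` with `ρ(g) = 1 + p^i·B` and the mod-`p` reduction of `B` equal to `A`. -/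
def Phi (p : ℕ) [Fact p.Prime] (n : ℕ) {G : Type*} [Group G]
    (ρ : G →* Matrix.GeneralLinearGroup (Fin n) ℤ_[p]) (i : ℕ) :
    Set (Matrix (Fin n) (Fin n) (ZMod p)) :=
  {A | ∃ (g : G) (B : Matrix (Fin n) (Fin n) ℤ_[p]),
    (ρ g).val = 1 + ((p : ℤ_[p]) ^ i) • B ∧ B.map PadicInt.toZMod = A}

section LevelResidues

variable {G R A S : Type*} [Group G] [CommRing R] [Ring A] [Algebra R A] [Ring S]

theorem one_add_smul_mul_one_add_smul (c : R) (B B' : A) :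
    (1 + c • B) * (1 + c • B') = 1 + c • (B + B' + c • (B * B')) := by
  simp only [mul_add, add_mul, one_mul, mul_one, smul_mul_assoc, mul_smul_comm, smul_smul,
    smul_add]
  abel

theorem eq_one_add_smul_of_one_add_smul_mul_eq_one {c : R} {B M : A}
    (h : (1 + c • B) * M = 1) : M = 1 + c • -(B * M) := by
  rw [← h, add_mul, one_mul, smul_mul_assoc, smul_neg]
  abel

theorem mul_one_add_smul_mul {x y : A} (h : x * y = 1) (c : R) (B : A) :
    x * (1 + c • B) * y = 1 + c • (x * B * y) := by
  rw [mul_add, add_mul, mul_one, h, mul_smul_comm, smul_mul_assoc]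

/-- The reductions under `π` of the matrices `B` with `ρ g = 1 + c • B`; for `c = p ^ i` and `π`
reduction mod `p` this is `Φ_i(ρ)`. -/
def levelResidues (ρ : G →* Aˣ) (c : R) (π : A →+* S) : Set S :=
  {s | ∃ g B, (ρ g : A) = 1 + c • B ∧ π B = s}

variable {ρ : G →* Aˣ} {c : R} {π : A →+* S}

theorem map_smul_eq_zero (hc : π (algebraMap R A c) = 0) (X : A) : π (c • X) = 0 := by
  rw [Algebra.smul_def, map_mul, hc, zero_mul]

theorem zero_mem_levelResidues : 0 ∈ levelResidues ρ c π :=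
  ⟨1, 0, by simp, map_zero π⟩

theorem add_mem_levelResidues (hc : π (algebraMap R A c) = 0) {s t : S}
    (hs : s ∈ levelResidues ρ c π) (ht : t ∈ levelResidues ρ c π) :
    s + t ∈ levelResidues ρ c π := by
  obtain ⟨g, B, hg, rfl⟩ := hs
  obtain ⟨h, B', hh, rfl⟩ := ht
  refine ⟨g * h, B + B' + c • (B * B'), ?_, ?_⟩
  · rw [map_mul, Units.val_mul, hg, hh, one_add_smul_mul_one_add_smul]
  · rw [map_add, map_add, map_smul_eq_zero hc, add_zero]

theorem neg_mem_levelResidues (hc : π (algebraMap R A c) = 0) {s : S}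
    (hs : s ∈ levelResidues ρ c π) : -s ∈ levelResidues ρ c π := by
  obtain ⟨g, B, hg, rfl⟩ := hs
  have hinv : (ρ g⁻¹ : A) = 1 + c • -(B * ρ g⁻¹) := by
    refine eq_one_add_smul_of_one_add_smul_mul_eq_one ?_
    rw [← hg, ← Units.val_mul, ← map_mul, mul_inv_cancel, map_one, Units.val_one]
  have hinv_residue : π (ρ g⁻¹) = 1 := by
    rw [hinv, map_add, map_one, map_smul_eq_zero hc, add_zero]
  exact ⟨g⁻¹, -(B * ρ g⁻¹), hinv, by rw [map_neg, map_mul, hinv_residue, mul_one]⟩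

theorem conj_mem_levelResidues (x : G) {s : S} (hs : s ∈ levelResidues ρ c π) :
    π (ρ x) * s * π (ρ x⁻¹) ∈ levelResidues ρ c π := by
  obtain ⟨g, B, hg, rfl⟩ := hs
  refine ⟨x * g * x⁻¹, ρ x * B * ρ x⁻¹, ?_, by rw [map_mul, map_mul]⟩
  rw [map_mul, map_mul, Units.val_mul, Units.val_mul, hg]
  exact mul_one_add_smul_mul (by rw [← Units.val_mul, ← map_mul, mul_inv_cancel, map_one,
    Units.val_one]) c B

end LevelResidues

theorem toZMod_mapMatrix_algebraMap_pow (p : ℕ) [Fact p.Prime] (n : ℕ) {i : ℕ} (hi : 1 ≤ i) :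
    (PadicInt.toZMod (p := p)).mapMatrix
      (algebraMap ℤ_[p] (Matrix (Fin n) (Fin n) ℤ_[p]) ((p : ℤ_[p]) ^ i)) = 0 := by
  rw [Matrix.algebraMap_eq_diagonal, RingHom.mapMatrix_apply, Matrix.diagonal_map (map_zero _)]
  simp [zero_pow (by omega : i ≠ 0)]

theorem stmt_9_general (p : ℕ) [Fact p.Prime] (n : ℕ)
    {G : Type*} [Group G] (ρ : G →* Matrix.GeneralLinearGroup (Fin n) ℤ_[p])
    (i : ℕ) (hi : 1 ≤ i) :
    (0 ∈ Phi p n ρ i) ∧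
    (∀ A B : Matrix (Fin n) (Fin n) (ZMod p),
      A ∈ Phi p n ρ i → B ∈ Phi p n ρ i → A + B ∈ Phi p n ρ i) ∧
    (∀ A : Matrix (Fin n) (Fin n) (ZMod p), A ∈ Phi p n ρ i → -A ∈ Phi p n ρ i) ∧
    (∀ (g : G) (A : Matrix (Fin n) (Fin n) (ZMod p)), A ∈ Phi p n ρ i →
      (Units.map (RingHom.mapMatrix (PadicInt.toZMod (p := p))).toMonoidHom (ρ g)).val * A *
      ((Units.map (RingHom.mapMatrix (PadicInt.toZMod (p := p))).toMonoidHom (ρ g))⁻¹).val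
        ∈ Phi p n ρ i) := by
  have hPhi : Phi p n ρ i = levelResidues ρ ((p : ℤ_[p]) ^ i) (PadicInt.toZMod.mapMatrix) := rfl
  have hc := toZMod_mapMatrix_algebraMap_pow p n hi
  rw [hPhi]
  refine ⟨zero_mem_levelResidues, fun _ _ => add_mem_levelResidues hc,
    fun _ => neg_mem_levelResidues hc, fun g _ hA => ?_⟩
  rw [← map_inv, Units.coe_map, ← map_inv]
  exact conj_mem_levelResidues g hA

theorem stmt_9 (p : ℕ) [Fact p.Prime] (n : ℕ) (hn : 1 ≤ n)
    {G : Type*} [Group G] (ρ : G →* Matrix.GeneralLinearGroup (Fin n) ℤ_[p])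
    (i : ℕ) (hi : 1 ≤ i) :
    (0 ∈ Phi p n ρ i) ∧
    (∀ A B : Matrix (Fin n) (Fin n) (ZMod p),
      A ∈ Phi p n ρ i → B ∈ Phi p n ρ i → A + B ∈ Phi p n ρ i) ∧
    (∀ A : Matrix (Fin n) (Fin n) (ZMod p), A ∈ Phi p n ρ i → -A ∈ Phi p n ρ i) ∧
    (∀ (g : G) (A : Matrix (Fin n) (Fin n) (ZMod p)), A ∈ Phi p n ρ i →
      (Units.map (RingHom.mapMatrix (PadicInt.toZMod (p := p))).toMonoidHom (ρ g)).val * A *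
      ((Units.map (RingHom.mapMatrix (PadicInt.toZMod (p := p))).toMonoidHom (ρ g))⁻¹).val
        ∈ Phi p n ρ i) :=
  stmt_9_general p n ρ i hi
end

section
/- Let p be a prime, n ≥ 1, G a group, ρ : G → GL_n(ℤ_p) a group homomorphism, and i, j ≥ 1 integers. If A ∈ Φ_i(ρ) and B ∈ Φ_j(ρ), then the commutator bracket A·B − B·A belongs to Φ_{i+j}(ρ). -/
lemma map_smul_zero (p : ℕ) [Fact p.Prime] (n : ℕ) (c : ℤ_[p]) (hc : PadicInt.toZMod c = 0)
    (X : Matrix (Fin n) (Fin n) ℤ_[p]) : (c • X).map PadicInt.toZMod = 0 := by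
  ext a b
  simp [Matrix.map_apply, Matrix.smul_apply, smul_eq_mul, map_mul, hc]

lemma toZMod_pow_zero (p : ℕ) [Fact p.Prime] (k : ℕ) (hk : 1 ≤ k) :
    PadicInt.toZMod ((p : ℤ_[p]) ^ k) = 0 := by
  rw [map_pow, map_natCast, ZMod.natCast_self, zero_pow (by omega)]

theorem stmt_10 (p : ℕ) [Fact p.Prime] (n : ℕ) (hn : 1 ≤ n)
    {G : Type*} [Group G] (ρ : G →* Matrix.GeneralLinearGroup (Fin n) ℤ_[p])
    (i j : ℕ) (hi : 1 ≤ i) (hj : 1 ≤ j)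
    (A B : Matrix (Fin n) (Fin n) (ZMod p))
    (hA : A ∈ Phi p n ρ i) (hB : B ∈ Phi p n ρ j) :
    A * B - B * A ∈ Phi p n ρ (i + j) := by
  obtain ⟨g, X, hgX, hXA⟩ := hA
  obtain ⟨h, Y, hhY, hYB⟩ := hB
  set N : Matrix (Fin n) (Fin n) ℤ_[p] :=
    ((ρ (h * g))⁻¹ : Matrix.GeneralLinearGroup (Fin n) ℤ_[p]).val with hN
  refine ⟨g * h * (h * g)⁻¹, (X * Y - Y * X) * N, ?_, ?_⟩
  · have hval : (ρ (g * h * (h * g)⁻¹)).val = (ρ g).val * (ρ h).val * N := by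
      rw [map_mul, map_mul, map_inv]
      simp [hN, Matrix.GeneralLinearGroup.coe_mul]
    have key : (ρ g).val * (ρ h).val
        = (ρ (h * g)).val + ((p : ℤ_[p]) ^ (i + j)) • (X * Y - Y * X) := by
      have : (ρ (h * g)).val = (ρ h).val * (ρ g).val := by
        rw [map_mul]; simp [Matrix.GeneralLinearGroup.coe_mul]
      rw [this, hgX, hhY]
      ring_nf
      rw [mul_add, add_mul, add_mul, mul_add, add_mul, add_mul]
      simp only [one_mul, mul_one, Matrix.smul_mul, Matrix.mul_smul, smul_smul, pow_add]
      module
    have hMN : (ρ (h * g)).val * N = 1 := by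
      rw [hN]
      exact congrArg Units.val (mul_inv_cancel (ρ (h * g)))
    rw [hval, key, add_mul, hMN, Matrix.smul_mul]
  · have hmapN : N.map PadicInt.toZMod = 1 := by
      have h1 : ((ρ (h * g)).val.map PadicInt.toZMod) = 1 := by
        have : (ρ (h * g)).val = (ρ h).val * (ρ g).val := by
          rw [map_mul]; simp [Matrix.GeneralLinearGroup.coe_mul]
        rw [this, hgX, hhY, Matrix.map_mul]
        simp [Matrix.map_add, map_smul_zero p n _ (toZMod_pow_zero p i hi),
          map_smul_zero p n _ (toZMod_pow_zero p j hj)]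
      have h2 : ((ρ (h * g)).val * N).map PadicInt.toZMod = 1 := by
        rw [show (ρ (h * g)).val * N = 1 from congrArg Units.val (mul_inv_cancel (ρ (h * g)))]
        simp
      rw [Matrix.map_mul, h1, one_mul] at h2
      exact h2
    rw [Matrix.map_mul, Matrix.map_sub _ (fun a b => map_sub PadicInt.toZMod a b),
      Matrix.map_mul, Matrix.map_mul, hXA, hYB, hmapN, mul_one]
end

section
/- Let p ≥ 7 be a prime, n ≥ 2, G a profinite group, ρ : G → GL_n(ℤ_p) a continuous group homomorphism, and m ≥ 1. Let μ ∈ M_n(𝔽_p) be the diagonal matrix whose (i,i)-entry (for 1 ≤ i ≤ n) equals 1 if i is even and 0 if i is odd. Suppose that Φ_m(ρ) contains μ, and contains e_{i,j} for every pair (i,j) with i ≠ j and i + j odd, where e_{i,j} is the matrix with (i,j)-entry 1 and all other entries 0. Then: (1) Φ_{4m}(ρ) contains every trace-zero matrix in M_n(𝔽_p); and (2) the image of ρ contains U_{4m}. -/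
open Matrix Filter Topology
open scoped commutatorElement

lemma Units.val_commutatorElement {R : Type*} [Ring R] (x y : Rˣ) :
    (⁅x, y⁆ : Rˣ).val = 1 + (x.val * y.val - y.val * x.val) * (x⁻¹ * y⁻¹).val := by
  have hyx : y.val * x.val * (x⁻¹ * y⁻¹).val = 1 := by
    simp [← Units.val_mul, mul_assoc]
  rw [commutatorElement_def, sub_mul, hyx, add_sub_cancel, Units.val_mul, Units.val_mul,
    Units.val_mul, Units.val_mul, mul_assoc _ (x⁻¹).val]

lemma exists_one_add_pow_eq {R : Type*} [Semiring R] (x : R) (N : ℕ) :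
    ∃ q : R, (1 + x) ^ N = 1 + N • x + x ^ 2 * q := by
  induction N with
  | zero => exact ⟨0, by simp⟩
  | succ N ih =>
    obtain ⟨q, hq⟩ := ih
    refine ⟨N • 1 + q + q * x, ?_⟩
    rw [pow_succ, hq, succ_nsmul]
    noncomm_ring

lemma Matrix.mem_of_trace_eq_zero {ι R : Type*} [Fintype ι] [DecidableEq ι] [CommRing R]
    {S : Submodule R (Matrix ι ι R)} (hoff : ∀ a b, a ≠ b → single a b 1 ∈ S)
    (hdiag : ∀ a b, single a a 1 - single b b 1 ∈ S) {A : Matrix ι ι R} (hA : A.trace = 0) :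
    A ∈ S := by
  cases isEmpty_or_nonempty ι
  · simp [Subsingleton.elim A 0]
  obtain ⟨z⟩ := ‹Nonempty ι›
  have hsum : A - A.trace • single z z 1 =
      ∑ a, ∑ b, A a b • (single a b 1 - single z z (if a = b then 1 else 0)) := by
    ext i j
    simp [Matrix.sum_apply, single_apply, trace, mul_sub, Finset.sum_sub_distrib, ite_and]
  rw [← sub_zero A, ← zero_smul R (single z z 1), ← hA, hsum]
  refine S.sum_mem fun a _ => S.sum_mem fun b _ => S.smul_mem _ ?_
  by_cases hab : a = b
  · subst hab
    simpa using hdiag a z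
  · simpa [hab] using hoff a b hab

lemma Matrix.diagonal_mul_single_sub_single_mul_diagonal {ι R : Type*} [Fintype ι] [DecidableEq ι]
    [CommRing R] (d : ι → R) (a b : ι) :
    diagonal d * single a b 1 - single a b 1 * diagonal d = (d a - d b) • single a b 1 := by
  ext i j
  by_cases h : a = i ∧ b = j
  · obtain ⟨rfl, rfl⟩ := h
    simp
  · simp [diagonal_mul, mul_diagonal, h]

lemma Matrix.GeneralLinearGroup.det_val_eq_one_of_mem_commutator {ι R : Type*} [Fintype ι]
    [DecidableEq ι] [CommRing R] {H K : Subgroup (GL ι R)} {k : GL ι R} (hk : k ∈ ⁅H, K⁆) :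
    k.val.det = 1 := by
  have hker : ⁅H, K⁆ ≤ GeneralLinearGroup.det.ker := Subgroup.commutator_le.2 fun g₁ _ g₂ _ => by
    rw [MonoidHom.mem_ker, map_commutatorElement, commutatorElement_eq_one_iff_commute]
    exact Commute.all _ _
  have h := congrArg Units.val ((MonoidHom.mem_ker).1 (hker hk))
  rwa [GeneralLinearGroup.val_det_apply, Units.val_one] at h

lemma PadicInt.tendsto_pow_smul_nhds_zero {p : ℕ} [Fact p.Prime] {κ : Type*} (j : ℕ)
    (D : ℕ → Matrix κ κ ℤ_[p]) :
    Tendsto (fun t => (p : ℤ_[p]) ^ (j + t) • D t) atTop (𝓝 0) := by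
  have hpow : Tendsto (fun t => ‖(p : ℤ_[p]) ^ (j + t)‖) atTop (𝓝 0) := by
    have h : Tendsto (fun t => (p : ℤ_[p]) ^ t) atTop (𝓝 0) :=
      tendsto_pow_atTop_nhds_zero_of_norm_lt_one ((PadicInt.norm_lt_one_iff_dvd _).2 dvd_rfl)
    simpa [add_comm] using ((tendsto_add_atTop_iff_nat j).2 h).norm
  refine tendsto_pi_nhds.2 fun a => tendsto_pi_nhds.2 fun b => squeeze_zero_norm (fun t => ?_) hpow
  rw [Matrix.smul_apply, smul_eq_mul, norm_mul]
  exact mul_le_of_le_one_right (norm_nonneg _) (PadicInt.norm_le_one _)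

namespace PadicMatrix

variable {ι : Type*} {p : ℕ} [Fact p.Prime]

lemma mapMatrix_toZMod_pow_smul [Fintype ι] [DecidableEq ι] {j : ℕ} (hj : j ≠ 0)
    (B : Matrix ι ι ℤ_[p]) : PadicInt.toZMod.mapMatrix ((p : ℤ_[p]) ^ j • B) = 0 := by
  ext a b
  simp [zero_pow hj]

lemma mapMatrix_toZMod_eq_one [Fintype ι] [DecidableEq ι] {j : ℕ} (hj : j ≠ 0)
    {X B : Matrix ι ι ℤ_[p]} (h : X = 1 + (p : ℤ_[p]) ^ j • B) :
    PadicInt.toZMod.mapMatrix X = 1 := by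
  rw [h, map_add, map_one, mapMatrix_toZMod_pow_smul hj, add_zero]

lemma exists_eq_p_smul_of_map_toZMod_eq_zero {B : Matrix ι ι ℤ_[p]}
    (h : B.map PadicInt.toZMod = 0) : ∃ D : Matrix ι ι ℤ_[p], B = (p : ℤ_[p]) • D := by
  have hdvd : ∀ a b, (p : ℤ_[p]) ∣ B a b := fun a b => by
    have hker : B a b ∈ RingHom.ker (PadicInt.toZMod (p := p)) := congrFun (congrFun h a) b
    rwa [PadicInt.ker_toZMod, PadicInt.maximalIdeal_eq_span_p, Ideal.mem_span_singleton] at hker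
  choose D hD using hdvd
  exact ⟨Matrix.of D, by ext a b; exact hD a b⟩

variable [Fintype ι] [DecidableEq ι]

lemma val_inv_eq_one_add_pow_smul {x : GL ι ℤ_[p]} {j : ℕ} {B : Matrix ι ι ℤ_[p]}
    (h : x.val = 1 + (p : ℤ_[p]) ^ j • B) :
    (x⁻¹).val = 1 + (p : ℤ_[p]) ^ j • -(B * (x⁻¹).val) := by
  have hx : x.val * (x⁻¹).val = 1 := x.mul_inv
  rw [h, add_mul, one_mul, smul_mul_assoc] at hx
  rw [smul_neg, eq_add_neg_iff_add_eq, hx]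

lemma mapMatrix_toZMod_inv_eq_one {x : GL ι ℤ_[p]} (h : PadicInt.toZMod.mapMatrix x.val = 1) :
    PadicInt.toZMod.mapMatrix (x⁻¹).val = 1 := by
  have hx := congrArg PadicInt.toZMod.mapMatrix x.mul_inv
  rwa [map_mul, h, one_mul, map_one] at hx

/-- The image of `H ∩ U_j` in `U_j / U_{j+1} ≅ M_ι(𝔽_p)`. -/
def levelSet (H : Subgroup (GL ι ℤ_[p])) (j : ℕ) : Set (Matrix ι ι (ZMod p)) :=
  {A | ∃ x ∈ H, ∃ B : Matrix ι ι ℤ_[p],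
    x.val = 1 + (p : ℤ_[p]) ^ j • B ∧ PadicInt.toZMod.mapMatrix B = A}

variable {H K : Subgroup (GL ι ℤ_[p])} {i j : ℕ}

lemma levelSet_mono (hHK : H ≤ K) : levelSet H j ⊆ levelSet K j :=
  fun _ ⟨x, hx, hB⟩ => ⟨x, hHK hx, hB⟩

lemma zero_mem_levelSet : 0 ∈ levelSet H j :=
  ⟨1, H.one_mem, 0, by simp, map_zero _⟩

lemma add_mem_levelSet (hj : j ≠ 0) {A A' : Matrix ι ι (ZMod p)} (hA : A ∈ levelSet H j)
    (hA' : A' ∈ levelSet H j) : A + A' ∈ levelSet H j := by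
  obtain ⟨x, hx, B, hxB, rfl⟩ := hA
  obtain ⟨x', hx', B', hxB', rfl⟩ := hA'
  refine ⟨x * x', H.mul_mem hx hx', B + B' + (p : ℤ_[p]) ^ j • (B * B'), ?_, ?_⟩
  · rw [Units.val_mul, hxB, hxB', add_mul, one_mul, mul_add, mul_one, smul_mul_smul_comm]
    module
  · rw [map_add, map_add, mapMatrix_toZMod_pow_smul hj, add_zero]

lemma neg_mem_levelSet (hj : j ≠ 0) {A : Matrix ι ι (ZMod p)} (hA : A ∈ levelSet H j) :
    -A ∈ levelSet H j := by
  obtain ⟨x, hx, B, hxB, rfl⟩ := hA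
  refine ⟨x⁻¹, H.inv_mem hx, _, val_inv_eq_one_add_pow_smul hxB, ?_⟩
  rw [map_neg, map_mul, mapMatrix_toZMod_inv_eq_one (mapMatrix_toZMod_eq_one hj hxB), mul_one]

variable (H) in
def levelSubmodule (hj : j ≠ 0) : Submodule (ZMod p) (Matrix ι ι (ZMod p)) :=
  AddSubgroup.toZModSubmodule p
    { carrier := levelSet H j
      zero_mem' := zero_mem_levelSet
      add_mem' := add_mem_levelSet hj
      neg_mem' := neg_mem_levelSet hj }

lemma lie_mem_levelSet (hi : i ≠ 0) (hj : j ≠ 0) {A A' : Matrix ι ι (ZMod p)}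
    (hA : A ∈ levelSet H i) (hA' : A' ∈ levelSet K j) :
    A * A' - A' * A ∈ levelSet ⁅H, K⁆ (i + j) := by
  obtain ⟨x, hx, B, hxB, rfl⟩ := hA
  obtain ⟨y, hy, B', hyB', rfl⟩ := hA'
  have hlie : x.val * y.val - y.val * x.val = (p : ℤ_[p]) ^ (i + j) • (B * B' - B' * B) := by
    rw [hxB, hyB', pow_add]
    simp only [add_mul, mul_add, one_mul, mul_one, smul_mul_smul_comm]
    module
  refine ⟨⁅x, y⁆, Subgroup.commutator_mem_commutator hx hy, (B * B' - B' * B) * (x⁻¹ * y⁻¹).val,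
    by rw [Units.val_commutatorElement, hlie, smul_mul_assoc], ?_⟩
  rw [map_mul, Units.val_mul, map_mul (PadicInt.toZMod.mapMatrix),
    mapMatrix_toZMod_inv_eq_one (mapMatrix_toZMod_eq_one hi hxB),
    mapMatrix_toZMod_inv_eq_one (mapMatrix_toZMod_eq_one hj hyB'), mul_one, mul_one,
    map_sub, map_mul, map_mul]

lemma levelSet_subset_succ (hj : 2 ≤ j) : levelSet H j ⊆ levelSet H (j + 1) := by
  rintro _ ⟨x, hx, B, hxB, rfl⟩
  obtain ⟨i, rfl⟩ := Nat.exists_eq_add_of_le' hj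
  obtain ⟨q, hq⟩ := exists_one_add_pow_eq ((p : ℤ_[p]) ^ (i + 2) • B) p
  refine ⟨x ^ p, H.pow_mem hx p, B + (p : ℤ_[p]) ^ (i + 1) • (B ^ 2 * q), ?_, ?_⟩
  · -- `(1 + p^j B)^p = 1 + p^(j+1) B + p^(2j) B² q`, and `2j ≥ j + 2`
    rw [Units.val_pow_eq_pow_val, hxB, hq, smul_pow, ← Nat.cast_smul_eq_nsmul ℤ_[p],
      smul_mul_assoc]
    module
  · rw [map_add, mapMatrix_toZMod_pow_smul i.succ_ne_zero, add_zero]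

lemma levelSet_subset_of_le (hi : 2 ≤ i) (hij : i ≤ j) : levelSet H i ⊆ levelSet H j := by
  induction j, hij using Nat.le_induction with
  | base => exact subset_rfl
  | succ j hij ih => exact ih.trans (levelSet_subset_succ (hi.trans hij))

lemma single_mem_levelSet_lie_diagonal {m : ℕ} (hm : m ≠ 0) (hj : j ≠ 0) {d : ι → ZMod p}
    {a b : ι} (hab : d a ≠ d b) (hμ : diagonal d ∈ levelSet H m) (hKH : K ≤ H)
    (he : single a b 1 ∈ levelSet K j) : single a b 1 ∈ levelSet ⁅H, H⁆ (m + j) := by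
  have hlie := levelSet_mono (Subgroup.commutator_mono le_rfl hKH) (lie_mem_levelSet hm hj hμ he)
  rw [diagonal_mul_single_sub_single_mul_diagonal] at hlie
  exact (Submodule.smul_mem_iff (levelSubmodule ⁅H, H⁆ (by omega)) (sub_ne_zero.2 hab)).1 hlie

lemma single_mem_levelSet_commutator {m : ℕ} (hm : m ≠ 0) {d : ι → ZMod p} {a b : ι}
    (hab : d a ≠ d b) (hμ : diagonal d ∈ levelSet H m) (he : single a b 1 ∈ levelSet H m)
    {k : ℕ} (hk : 2 ≤ k) : single a b 1 ∈ levelSet ⁅H, H⁆ (k * m) := by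
  induction k, hk using Nat.le_induction with
  | base => simpa [two_mul] using single_mem_levelSet_lie_diagonal hm hm hab hμ le_rfl he
  | succ k hk ih =>
    rw [add_one_mul, add_comm]
    exact single_mem_levelSet_lie_diagonal hm (by positivity) hab hμ H.commutator_le_self ih

lemma trace_eq_zero_mem_levelSet_commutator {m : ℕ} (hm : m ≠ 0) {d : ι → ZMod p}
    (hd : ∃ a b, d a ≠ d b) (hμ : diagonal d ∈ levelSet H m)
    (he : ∀ a b, d a ≠ d b → single a b 1 ∈ levelSet H m) {A : Matrix ι ι (ZMod p)}
    (hA : A.trace = 0) : A ∈ levelSet ⁅H, H⁆ (4 * m) := by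
  obtain ⟨a₀, b₀, hd⟩ := hd
  have hsep : ∀ a, ∃ c, d a ≠ d c := fun a => by
    by_cases h : d a = d a₀
    · exact ⟨b₀, h ▸ hd⟩
    · exact ⟨a₀, h⟩
  let S := levelSubmodule ⁅H, H⁆ (p := p) (j := 4 * m) (by positivity)
  have hlie : ∀ a b c, d a ≠ d c → d c ≠ d b →
      single a c 1 * single c b 1 - single c b 1 * single a c 1 ∈ S := by
    intro a b c hac hcb
    have h := lie_mem_levelSet hm (by positivity) (he a c hac)
      (single_mem_levelSet_commutator hm hcb hμ (he c b hcb) (k := 3) (by norm_num))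
    rw [show m + 3 * m = 4 * m by ring] at h
    exact levelSet_mono (Subgroup.commutator_mono le_rfl H.commutator_le_self) h
  refine mem_of_trace_eq_zero (S := S) (fun a b hab => ?_) (fun a b => ?_) hA
  · by_cases hd : d a = d b
    · obtain ⟨c, hc⟩ := hsep a
      simpa [single_mul_single_of_ne _ _ _ _ (Ne.symm hab)] using hlie a b c hc (hd ▸ hc).symm
    · exact single_mem_levelSet_commutator hm hd hμ (he a b hd) (by norm_num)
  · have hdiag : ∀ a b, d a ≠ d b → single a a 1 - single b b 1 ∈ S := fun a b hab => by
      simpa using hlie a a b hab hab.symm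
    by_cases hd : d a = d b
    · obtain ⟨c, hc⟩ := hsep a
      simpa using S.add_mem (hdiag a c hc) (hdiag c b (hd ▸ hc).symm)
    · exact hdiag a b hd

lemma trace_mapMatrix_toZMod_eq_zero (hj : j ≠ 0) {C : Matrix ι ι ℤ_[p]}
    (h : (1 + (p : ℤ_[p]) ^ j • C).det = 1) : (PadicInt.toZMod.mapMatrix C).trace = 0 := by
  -- `det (1 + r • C) = 1 + r * trace C + r ^ 2 * E` with `r = p ^ j`
  set E := ((1 + (Polynomial.X : Polynomial ℤ_[p]) • C.map Polynomial.C).det.divX.divX).eval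
    ((p : ℤ_[p]) ^ j)
  have hp : (p : ℤ_[p]) ^ j ≠ 0 := pow_ne_zero _ (Nat.cast_ne_zero.2 (Fact.out : p.Prime).ne_zero)
  have htrace : C.trace = -(E * (p : ℤ_[p]) ^ j) := by
    have hdet := det_one_add_smul ((p : ℤ_[p]) ^ j) C
    rw [h] at hdet
    have : (p : ℤ_[p]) ^ j * (C.trace + E * (p : ℤ_[p]) ^ j) = 0 := by linear_combination -hdet
    exact eq_neg_of_add_eq_zero_left ((mul_eq_zero.1 this).resolve_left hp)
  rw [RingHom.mapMatrix_apply, ← AddMonoidHom.map_trace, htrace]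
  simp [zero_pow hj]

lemma exists_mem_eq_mul_one_add_pow_succ_smul (hK : ∀ k ∈ K, k.val.det = 1) (hj : j ≠ 0)
    (hsl : ∀ A : Matrix ι ι (ZMod p), A.trace = 0 → A ∈ levelSet K j)
    {u k : GL ι ℤ_[p]} (hu : u.val.det = 1) (hk : k ∈ K) {C : Matrix ι ι ℤ_[p]}
    (hC : u.val = k.val * (1 + (p : ℤ_[p]) ^ j • C)) :
    ∃ k' ∈ K, ∃ C' : Matrix ι ι ℤ_[p], u.val = k'.val * (1 + (p : ℤ_[p]) ^ (j + 1) • C') := by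
  have hdet : (1 + (p : ℤ_[p]) ^ j • C).det = 1 := by
    simpa [hu, hK k hk] using (congrArg det hC).symm
  obtain ⟨k₁, hk₁, B, hk₁B, hBC⟩ := hsl _ (trace_mapMatrix_toZMod_eq_zero hj hdet)
  obtain ⟨D, hD⟩ := exists_eq_p_smul_of_map_toZMod_eq_zero
    (show PadicInt.toZMod.mapMatrix (C - B) = 0 by rw [map_sub, hBC, sub_self])
  refine ⟨k * k₁, K.mul_mem hk hk₁, (k₁⁻¹).val * D, ?_⟩
  rw [hC, Units.val_mul, mul_assoc]
  congr 1
  rw [mul_add, mul_one, mul_smul_comm, ← mul_assoc, k₁.mul_inv, one_mul, hk₁B,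
    sub_eq_iff_eq_add'.1 hD]
  module

lemma val_mem_closure_of_trace_eq_zero_mem (hK : ∀ k ∈ K, k.val.det = 1) {j₀ : ℕ} (hj₀ : j₀ ≠ 0)
    (hsl : ∀ j, j₀ ≤ j → ∀ A : Matrix ι ι (ZMod p), A.trace = 0 → A ∈ levelSet K j)
    {u : GL ι ℤ_[p]} (hu : u.val.det = 1) {B : Matrix ι ι ℤ_[p]}
    (hB : u.val = 1 + (p : ℤ_[p]) ^ j₀ • B) :
    u.val ∈ closure (Units.val '' (K : Set (GL ι ℤ_[p]))) := by
  have happrox : ∀ t, ∃ k ∈ K, ∃ C : Matrix ι ι ℤ_[p],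
      u.val = k.val * (1 + (p : ℤ_[p]) ^ (j₀ + t) • C) := by
    intro t
    induction t with
    | zero => exact ⟨1, K.one_mem, B, by simpa using hB⟩
    | succ t ih =>
      obtain ⟨k, hk, C, hC⟩ := ih
      exact exists_mem_eq_mul_one_add_pow_succ_smul (j := j₀ + t) hK (by omega) (hsl _ (by omega))
        hu hk hC
  choose k hk C hC using happrox
  have hk_eq : ∀ t, (k t).val = u.val - (p : ℤ_[p]) ^ (j₀ + t) • ((k t).val * C t) := fun t => by
    rw [hC t, mul_add, mul_one, mul_smul_comm, add_sub_cancel_right]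
  refine mem_closure_of_tendsto (f := fun t => (k t).val) (b := atTop) ?_
    (Eventually.of_forall fun t => ⟨k t, hk t, rfl⟩)
  have h := tendsto_const_nhds (x := u.val).sub
    (PadicInt.tendsto_pow_smul_nhds_zero j₀ fun t => (k t).val * C t)
  rw [sub_zero] at h
  exact h.congr fun t => (hk_eq t).symm

end PadicMatrix

open PadicMatrix

lemma Phi_eq_levelSet_range (p : ℕ) [Fact p.Prime] {n : ℕ} {G : Type*} [Group G]
    (ρ : G →* GL (Fin n) ℤ_[p]) (j : ℕ) : Phi p n ρ j = levelSet ρ.range j := by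
  ext A
  simp [Phi, levelSet]

theorem stmt_12_general (p : ℕ) [Fact p.Prime] (n : ℕ) (hn : 2 ≤ n)
    {G : Type*} [Group G] [TopologicalSpace G]
    [CompactSpace G]
    (ρ : G →* Matrix.GeneralLinearGroup (Fin n) ℤ_[p]) (hρ : Continuous ρ)
    (m : ℕ) (hm : 1 ≤ m)
    -- `μ` is the diagonal matrix whose `(i,i)`-entry (for `1 ≤ i ≤ n`, here indexed by
    -- `Fin n` via `i ↦ i + 1`) equals `1` if `i` is even and `0` if `i` is odd.
    (hμ : Matrix.diagonal (fun i : Fin n =>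
        if Even ((i : ℕ) + 1) then (1 : ZMod p) else 0) ∈ Phi p n ρ m)
    (he : ∀ i j : Fin n, i ≠ j → Odd (((i : ℕ) + 1) + ((j : ℕ) + 1)) →
        Matrix.single i j (1 : ZMod p) ∈ Phi p n ρ m) :
    (∀ A : Matrix (Fin n) (Fin n) (ZMod p), A.trace = 0 → A ∈ Phi p n ρ (4 * m)) ∧
    (∀ u : Matrix.GeneralLinearGroup (Fin n) ℤ_[p],
      u.val.det = 1 →
      (∃ B : Matrix (Fin n) (Fin n) ℤ_[p], u.val = 1 + ((p : ℤ_[p]) ^ (4 * m)) • B) →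
      u ∈ Set.range ρ) := by
  set d : Fin n → ZMod p := fun i => if Even ((i : ℕ) + 1) then 1 else 0
  have hd : ∃ a b, d a ≠ d b := ⟨⟨0, by omega⟩, ⟨1, by omega⟩, by simp [d]⟩
  have hodd : ∀ a b, d a ≠ d b → Odd (((a : ℕ) + 1) + ((b : ℕ) + 1)) := fun a b hab => by
    rw [← Nat.not_even_iff_odd, Nat.even_add]
    exact fun h => hab (by simp only [d, h])
  simp only [Phi_eq_levelSet_range] at hμ he ⊢
  have hsl : ∀ A : Matrix (Fin n) (Fin n) (ZMod p), A.trace = 0 →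
      A ∈ levelSet ⁅ρ.range, ρ.range⁆ (4 * m) :=
    fun A => trace_eq_zero_mem_levelSet_commutator (by omega) hd hμ
      fun a b hab => he a b (fun h => hab (h ▸ rfl)) (hodd a b hab)
  refine ⟨fun A hA => levelSet_mono ρ.range.commutator_le_self (hsl A hA), ?_⟩
  rintro u hu ⟨B, hB⟩
  have hclosed : IsClosed (Units.val '' (ρ.range : Set (GL (Fin n) ℤ_[p]))) :=
    ((ρ.coe_range ▸ isCompact_range hρ).image Units.continuous_val).isClosed
  have hu_mem := closure_minimal (Set.image_mono ρ.range.commutator_le_self)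
    hclosed (val_mem_closure_of_trace_eq_zero_mem
      (fun _ => GeneralLinearGroup.det_val_eq_one_of_mem_commutator) (by omega)
      (fun j hj A hA => levelSet_subset_of_le (by omega) hj (hsl A hA)) hu hB)
  obtain ⟨x, hx, hxu⟩ := hu_mem
  exact Units.ext hxu ▸ hx

theorem stmt_12 (p : ℕ) [Fact p.Prime] (hp7 : 7 ≤ p) (n : ℕ) (hn : 2 ≤ n)
    {G : Type*} [Group G] [TopologicalSpace G] [IsTopologicalGroup G]
    [CompactSpace G] [TotallyDisconnectedSpace G] [T2Space G]
    (ρ : G →* Matrix.GeneralLinearGroup (Fin n) ℤ_[p]) (hρ : Continuous ρ)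
    (m : ℕ) (hm : 1 ≤ m)
    -- `μ` is the diagonal matrix whose `(i,i)`-entry (for `1 ≤ i ≤ n`, here indexed by
    -- `Fin n` via `i ↦ i + 1`) equals `1` if `i` is even and `0` if `i` is odd.
    (hμ : Matrix.diagonal (fun i : Fin n =>
        if Even ((i : ℕ) + 1) then (1 : ZMod p) else 0) ∈ Phi p n ρ m)
    (he : ∀ i j : Fin n, i ≠ j → Odd (((i : ℕ) + 1) + ((j : ℕ) + 1)) →
        Matrix.single i j (1 : ZMod p) ∈ Phi p n ρ m) :
    (∀ A : Matrix (Fin n) (Fin n) (ZMod p), A.trace = 0 → A ∈ Phi p n ρ (4 * m)) ∧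
    (∀ u : Matrix.GeneralLinearGroup (Fin n) ℤ_[p],
      u.val.det = 1 →
      (∃ B : Matrix (Fin n) (Fin n) ℤ_[p], u.val = 1 + ((p : ℤ_[p]) ^ (4 * m)) • B) →
      u ∈ Set.range ρ) :=
  stmt_12_general p n hn ρ hρ m hm hμ he
end

section
/- Let p be a prime, k ≥ 1, G a group, and ψ : G → (ℤ/p^kℤ)ˣ a group homomorphism; for 1 ≤ j ≤ k let ψ_j denote the composition of ψ with the reduction map (ℤ/p^kℤ)ˣ → (ℤ/p^jℤ)ˣ. Assume that H⁰(G, 𝔽_p(ψ₁)) = 0, H²(G, 𝔽_p(ψ₁)) = 0, and H¹(G, 𝔽_p(ψ₁)) is isomorphic to ℤ/pℤ. Then H¹(G, (ℤ/p^kℤ)(ψ)) is isomorphic to ℤ/p^kℤ. -/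
/-!
Write `A_m` for `ℤ/m` twisted by the reduction of `ψ`. The short exact sequences
`0 → A_p → A_{p^(j+1)} → A_{p^j} → 0` and `0 → A_{p^j} → A_{p^(j+1)} → A_p → 0`
(multiplication by `p^j`, resp. `p`, followed by reduction) and `H⁰(A_p) = H²(A_p) = 0` show that
`H¹(A_{p^(j+1)}) → H¹(A_{p^j})` is onto with kernel the image of `H¹(A_p) ≅ ℤ/p`, and that
`H¹(A_{p^j}) → H¹(A_{p^(j+1)})` is injective. As reducing and then multiplying by `p` is
multiplication by `p` on `A_{p^(j+1)}`, a lift `x` of a generator of `H¹(A_{p^j}) ≅ ℤ/p^j`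
satisfies `p^j • x ≠ 0 = p^(j+1) • x`, and `p^j • x` spans the kernel; hence `x` generates a
cyclic group of order `p^(j+1)`. Induction on `j` finishes the proof.
-/

/-- The representation of `G` on `ℤ/mℤ` where `g` acts as multiplication by `ψ g`. -/
noncomputable def charRep (m : ℕ) {G : Type} [Group G] (ψ : G →* (ZMod m)ˣ) : Rep ℤ G :=
  Rep.of ((Module.toModuleEnd ℤ (ZMod m)).toMonoidHom.comp ((Units.coeHom (ZMod m)).comp ψ))

open CategoryTheory groupCohomology AddSubgroup

theorem nonempty_addEquiv_zmod_pow_succ {M N K : Type*} [AddCommGroup M] [AddCommGroup N]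
    [AddCommGroup K] {p j : ℕ} [hp : Fact p.Prime] (hj : j ≠ 0) {κ : K →+ M} {π : M →+ N}
    (hκπ : Function.Exact κ π) (hπ : Function.Surjective π)
    {ι : N →+ M} (hι : Function.Injective ι) (hιπ : ∀ x, ι (π x) = p • x)
    (eK : K ≃+ ZMod p) (eN : N ≃+ ZMod (p ^ j)) : Nonempty (M ≃+ ZMod (p ^ (j + 1))) := by
  have : NeZero (p ^ j) := ⟨pow_ne_zero _ hp.out.ne_zero⟩
  obtain ⟨x, hx⟩ := hπ (eN.symm 1)
  have hπx (n : ℕ) : π (n • x) = eN.symm n := by rw [map_nsmul, hx, ← map_nsmul, nsmul_one]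
  have hpow (i : ℕ) : p ^ (i + 1) • x = ι (eN.symm (p ^ i : ℕ)) := by
    rw [pow_succ, mul_nsmul, ← hιπ, hπx]
  have hfin : p ^ (j + 1) • x = 0 := by
    rw [hpow, ZMod.natCast_self, map_zero, map_zero]
  have hnot : p ^ j • x ≠ 0 := by
    obtain ⟨i, rfl⟩ := Nat.exists_eq_succ_of_ne_zero hj
    rw [hpow, ← map_zero ι, hι.ne_iff, ← map_zero eN.symm, eN.symm.injective.ne_iff, Ne,
      ZMod.natCast_eq_zero_iff]
    exact (Nat.pow_dvd_pow_iff_le_right hp.out.one_lt).not.2 (by omega)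
  obtain ⟨k₀, hk₀⟩ : p ^ j • x ∈ Set.range κ :=
    (hκπ _).1 (by rw [hπx, ZMod.natCast_self, map_zero])
  have hgen (z : M) : z ∈ zmultiples x := by
    have hk₀0 : k₀ ≠ 0 := by rintro rfl; exact hnot (by rw [← hk₀, map_zero])
    have hcardK : Nat.card K = p := by rw [Nat.card_congr eK.toEquiv, Nat.card_zmod]
    obtain ⟨k, hk⟩ := (hκπ (z - (eN (π z)).val • x)).1 (by
      rw [map_sub, hπx, ZMod.natCast_zmod_val, AddEquiv.symm_apply_apply, sub_self])
    obtain ⟨m, rfl⟩ :=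
      mem_zmultiples_iff.1 (zmultiples_eq_top_of_prime_card hcardK hk₀0 ▸ mem_top k)
    rw [map_zsmul, hk₀, eq_sub_iff_add_eq] at hk
    rw [← hk]
    exact add_mem (zsmul_mem (nsmul_mem (mem_zmultiples x) _) m) (nsmul_mem (mem_zmultiples x) _)
  have hcard : Nat.card M = p ^ (j + 1) := by
    rw [← addOrderOf_eq_prime_pow hnot hfin, ← Nat.card_zmultiples,
      Nat.card_congr (Equiv.subtypeUnivEquiv hgen)]
  exact ⟨(zmodAddEquivOfGenerator hgen hcard).symm⟩

namespace Rep

variable {k G : Type} [CommRing k] [Group G]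

theorem shortExact_of_exact {S : ShortComplex (Rep k G)}
    (hS : Function.Exact S.f.hom S.g.hom) (hf : Function.Injective S.f.hom)
    (hg : Function.Surjective S.g.hom) : S.ShortExact where
  exact := (forget₂ (Rep k G) (ModuleCat k)).reflects_exact_of_faithful _ <|
    (ShortComplex.moduleCat_exact_iff_range_eq_ker _).2 (LinearMap.exact_iff.1 hS).symm
  mono_f := (Rep.mono_iff_injective _).2 hf
  epi_g := (Rep.epi_iff_surjective _).2 hg

end Rep

namespace groupCohomology

variable {k G : Type} [CommRing k] [Group G] {X : ShortComplex (Rep k G)}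

instance functor_additive (n : ℕ) : (functor k G n).Additive where
  map_add := (cochainsFunctor k G ⋙ HomologicalComplex.homologyFunctor _ _ n).map_add

theorem functor_map_exact (hX : X.ShortExact) (n : ℕ) :
    Function.Exact ((functor k G n).map X.f) ((functor k G n).map X.g) :=
  LinearMap.exact_iff.2 ((mapShortComplex₂_exact hX n).moduleCat_range_eq_ker).symm

theorem functor_map_f_injective (hX : X.ShortExact) (n : ℕ)
    (h : Subsingleton (groupCohomology X.X₃ n)) :
    Function.Injective ((functor k G (n + 1)).map X.f) := by
  have hexact := (mapShortComplex₁_exact hX (rfl : n + 1 = n + 1)).moduleCat_range_eq_ker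
  rw [injective_iff_map_eq_zero]
  intro x hx
  obtain ⟨y, rfl⟩ := hexact.ge (LinearMap.mem_ker.2 hx)
  exact (congrArg _ (h.elim y 0)).trans (map_zero _)

theorem functor_map_g_surjective (hX : X.ShortExact) (n : ℕ)
    (h : Subsingleton (groupCohomology X.X₁ (n + 1))) :
    Function.Surjective ((functor k G n).map X.g) := by
  have hexact := (mapShortComplex₃_exact hX (rfl : n + 1 = n + 1)).moduleCat_range_eq_ker
  intro x
  exact hexact.ge (h.elim _ 0)

end groupCohomology

namespace ZMod

variable {n m N : ℕ}

def natMulHom (n : ℕ) (hN : n * m = N) : ZMod m →+ ZMod N :=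
  ZMod.lift m ⟨(AddMonoidHom.mulLeft (n : ZMod N)).comp (Int.castAddHom (ZMod N)), by
    simp [← Nat.cast_mul, hN]⟩

theorem natMulHom_intCast (hN : n * m = N) (a : ℤ) : natMulHom n hN a = n * a := by
  simp [natMulHom, ZMod.lift_coe]

theorem natMulHom_castHom (hN : n * m = N) (x : ZMod N) :
    natMulHom n hN (castHom (Dvd.intro_left n hN) (ZMod m) x) = n * x := by
  obtain ⟨a, rfl⟩ := intCast_surjective x
  rw [map_intCast, natMulHom_intCast]

theorem natMulHom_castHom_mul (hN : n * m = N) (x : ZMod N) (y : ZMod m) :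
    natMulHom n hN (castHom (Dvd.intro_left n hN) (ZMod m) x * y) = x * natMulHom n hN y := by
  obtain ⟨a, rfl⟩ := intCast_surjective x
  obtain ⟨b, rfl⟩ := intCast_surjective y
  rw [map_intCast, ← Int.cast_mul, natMulHom_intCast, natMulHom_intCast]
  push_cast
  ring

theorem natMulHom_injective [NeZero N] (hN : n * m = N) : Function.Injective (natMulHom n hN) := by
  have hn : (n : ℤ) ≠ 0 := Int.natCast_ne_zero.2 (left_ne_zero_of_mul (hN.symm ▸ NeZero.ne N))
  rw [injective_iff_map_eq_zero]
  intro x hx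
  obtain ⟨a, rfl⟩ := intCast_surjective x
  rw [natMulHom_intCast, ← Int.cast_natCast, ← Int.cast_mul, intCast_zmod_eq_zero_iff_dvd,
    ← hN, Nat.cast_mul] at hx
  exact (intCast_zmod_eq_zero_iff_dvd a m).2 ((mul_dvd_mul_iff_left hn).1 hx)

theorem exact_natMulHom_castHom (hN : n * m = N) :
    Function.Exact (natMulHom n hN) (castHom (Dvd.intro m hN) (ZMod n)) := by
  intro x
  obtain ⟨a, rfl⟩ := intCast_surjective x
  rw [map_intCast, intCast_zmod_eq_zero_iff_dvd]
  constructor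
  · rintro ⟨c, rfl⟩
    exact ⟨c, by rw [natMulHom_intCast]; push_cast; rfl⟩
  · rintro ⟨y, hy⟩
    obtain ⟨b, rfl⟩ := intCast_surjective y
    rw [natMulHom_intCast, ← Int.cast_natCast, ← Int.cast_mul, intCast_eq_intCast_iff_dvd_sub,
      ← hN, Nat.cast_mul] at hy
    have hna : (n : ℤ) ∣ a - n * b := (dvd_mul_right _ _).trans hy
    simpa using dvd_add hna (dvd_mul_right (n : ℤ) b)

end ZMod

section CharRep

variable {G : Type} [Group G] {n m N : ℕ}

def reduceChar (m : ℕ) (hm : m ∣ N) (χ : G →* (ZMod N)ˣ) : G →* (ZMod m)ˣ :=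
  (Units.map (ZMod.castHom hm (ZMod m)).toMonoidHom).comp χ

theorem reduceChar_reduceChar {M : ℕ} (hm : m ∣ N) (hN : N ∣ M) (χ : G →* (ZMod M)ˣ) :
    reduceChar m hm (reduceChar N hN χ) = reduceChar m (hm.trans hN) χ := by
  ext g
  exact DFunLike.congr_fun (ZMod.castHom_comp hm hN) (χ g : ZMod M)

theorem reduceChar_self (χ : G →* (ZMod N)ˣ) : reduceChar N dvd_rfl χ = χ := by
  ext g
  simp [reduceChar]

def charRepCast (hm : m ∣ N) (χ : G →* (ZMod N)ˣ) :
    charRep N χ ⟶ charRep m (reduceChar m hm χ) :=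
  Rep.ofHom ⟨(ZMod.castHom hm (ZMod m)).toAddMonoidHom.toIntLinearMap, fun g => by
    ext x
    exact map_mul (ZMod.castHom hm (ZMod m)) _ x⟩

def charRepMul (n : ℕ) (hN : n * m = N) (χ : G →* (ZMod N)ˣ) :
    charRep m (reduceChar m (Dvd.intro_left n hN) χ) ⟶ charRep N χ :=
  Rep.ofHom ⟨(ZMod.natMulHom n hN).toIntLinearMap, fun g => by
    ext x
    exact ZMod.natMulHom_castHom_mul hN _ x⟩

theorem charRepCast_comp_charRepMul (hN : n * m = N) (χ : G →* (ZMod N)ˣ) :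
    charRepCast (Dvd.intro_left n hN) χ ≫ charRepMul n hN χ =
      (n : ℤ) • 𝟙 (charRep N χ) := by
  ext (x : ZMod N)
  change ZMod.natMulHom n hN (ZMod.castHom (Dvd.intro_left n hN) (ZMod m) x) =
    ((n : ℤ) • x : ZMod N)
  rw [ZMod.natMulHom_castHom, natCast_zsmul, nsmul_eq_mul]

noncomputable def charRepShortComplex (hN : n * m = N) (χ : G →* (ZMod N)ˣ) :
    ShortComplex (Rep ℤ G) :=
  ShortComplex.mk (charRepMul n hN χ) (charRepCast (Dvd.intro m hN) χ) <| by
    ext x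
    exact (ZMod.exact_natMulHom_castHom hN).apply_apply_eq_zero x

theorem charRepShortComplex_shortExact [NeZero N] (hN : n * m = N) (χ : G →* (ZMod N)ˣ) :
    (charRepShortComplex hN χ).ShortExact :=
  Rep.shortExact_of_exact (ZMod.exact_natMulHom_castHom hN) (ZMod.natMulHom_injective hN)
    (ZMod.castHom_surjective (Dvd.intro m hN))

theorem nonempty_H1_charRep_addEquiv_pow_succ {p j : ℕ} [hp : Fact p.Prime] (hj : j ≠ 0)
    (χ : G →* (ZMod (p ^ (j + 1)))ˣ)
    (h0 : Subsingleton (H0 (charRep p (reduceChar p (dvd_pow_self p j.succ_ne_zero) χ))))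
    (h2 : Subsingleton (H2 (charRep p (reduceChar p (dvd_pow_self p j.succ_ne_zero) χ))))
    (h1p : Nonempty (H1 (charRep p (reduceChar p (dvd_pow_self p j.succ_ne_zero) χ)) ≃+ ZMod p))
    (h1 : Nonempty (H1 (charRep (p ^ j) (reduceChar (p ^ j) (pow_dvd_pow p j.le_succ) χ)) ≃+
      ZMod (p ^ j))) :
    Nonempty (H1 (charRep (p ^ (j + 1)) χ) ≃+ ZMod (p ^ (j + 1))) := by
  have : NeZero (p ^ (j + 1)) := ⟨pow_ne_zero _ hp.out.ne_zero⟩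
  let X := charRepShortComplex (pow_succ p j).symm χ
  let Y := charRepShortComplex (pow_succ' p j).symm χ
  have hX : X.ShortExact := charRepShortComplex_shortExact _ χ
  have hY : Y.ShortExact := charRepShortComplex_shortExact _ χ
  have hιπ (x : H1 (charRep (p ^ (j + 1)) χ)) :
      (functor ℤ G 1).map Y.f ((functor ℤ G 1).map X.g x) = p • x := by
    change ((functor ℤ G 1).map (charRepCast _ χ) ≫
      (functor ℤ G 1).map (charRepMul p (pow_succ' p j).symm χ)) x = p • x
    rw [← Functor.map_comp, charRepCast_comp_charRepMul, Functor.map_zsmul,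
      CategoryTheory.Functor.map_id]
    exact natCast_zsmul x p
  obtain ⟨eK⟩ := h1p
  obtain ⟨eN⟩ := h1
  exact nonempty_addEquiv_zmod_pow_succ hj (κ := ((functor ℤ G 1).map X.f).hom.toAddMonoidHom)
    (π := ((functor ℤ G 1).map X.g).hom.toAddMonoidHom)
    (ι := ((functor ℤ G 1).map Y.f).hom.toAddMonoidHom)
    (functor_map_exact hX 1) (functor_map_g_surjective hX 1 h2) (functor_map_f_injective hY 0 h0)
    hιπ eK eN

theorem nonempty_H1_charRep_reduceChar_addEquiv {p k : ℕ} [Fact p.Prime] (hk : k ≠ 0)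
    (ψ : G →* (ZMod (p ^ k))ˣ)
    (h0 : Subsingleton (H0 (charRep p (reduceChar p (dvd_pow_self p hk) ψ))))
    (h2 : Subsingleton (H2 (charRep p (reduceChar p (dvd_pow_self p hk) ψ))))
    (h1 : Nonempty (H1 (charRep p (reduceChar p (dvd_pow_self p hk) ψ)) ≃+ ZMod p))
    {j : ℕ} (hj : j ≠ 0) (hjk : j ≤ k) :
    Nonempty (H1 (charRep (p ^ j) (reduceChar (p ^ j) (pow_dvd_pow p hjk) ψ)) ≃+
      ZMod (p ^ j)) := by
  induction j with
  | zero => contradiction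
  | succ j ih =>
    rcases Nat.eq_zero_or_pos j with rfl | hj
    -- `ZMod (p ^ 1)` is not syntactically `ZMod p`, so transport along `p ^ 1 = p`
    · have base (m : ℕ) (hm : m ∣ p ^ k) (hmp : m = p) :
          Nonempty (H1 (charRep m (reduceChar m hm ψ)) ≃+ ZMod m) := by
        subst hmp
        exact h1
      exact base _ _ (pow_one p)
    · apply nonempty_H1_charRep_addEquiv_pow_succ hj.ne' (reduceChar _ (pow_dvd_pow p hjk) ψ) <;>
        rw [reduceChar_reduceChar]
      exacts [h0, h2, h1, ih hj.ne' (by omega)]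

end CharRep

theorem stmt_13 (p : ℕ) (hp : p.Prime) (k : ℕ) (hk : 1 ≤ k)
    {G : Type} [Group G] (ψ : G →* (ZMod (p ^ k))ˣ)
    (h0 : Subsingleton (groupCohomology.H0 (charRep p
      ((Units.map (ZMod.castHom (dvd_pow_self p (by omega : k ≠ 0)) (ZMod p)).toMonoidHom).comp
        ψ))))
    (h2 : Subsingleton (groupCohomology.H2 (charRep p
      ((Units.map (ZMod.castHom (dvd_pow_self p (by omega : k ≠ 0)) (ZMod p)).toMonoidHom).comp
        ψ))))
    (h1 : Nonempty ((groupCohomology.H1 (charRep p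
      ((Units.map (ZMod.castHom (dvd_pow_self p (by omega : k ≠ 0)) (ZMod p)).toMonoidHom).comp
        ψ))) ≃+ ZMod p)) :
    Nonempty ((groupCohomology.H1 (charRep (p ^ k) ψ)) ≃+ ZMod (p ^ k)) := by
  have : Fact p.Prime := ⟨hp⟩
  have h := nonempty_H1_charRep_reduceChar_addEquiv (by omega) ψ h0 h2 h1 (j := k) (by omega)
    le_rfl
  rwa [reduceChar_self] at h
end

section
/- Let p be a prime, n, M ≥ 1 integers, G a group, and ρ : G → GL_n(ℤ/p^{2M}ℤ) a group homomorphism with reduction ρ_M : G → GL_n(ℤ/p^Mℤ) modulo p^M. Then for every B ∈ M_n(𝔽_p) the following are equivalent: (i) there exists g ∈ G with ρ(g) = 1 + p^{2M−1}·B, where p^{2M−1}·B denotes the matrix in M_n(ℤ/p^{2M}ℤ) obtained by multiplying any lift of B by p^{2M−1} (independent of the lift); (ii) p^{M−1}·B̂ ∈ ℳ, where B̂ ∈ M_n(ℤ/p^Mℤ) is any lift of B (the element p^{M−1}·B̂ of M_n(ℤ/p^Mℤ) is independent of the choice of lift). -/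
/-- `ℳ`: the set of matrices `A` over `ℤ/p^Mℤ` such that there is `g ∈ G` with
`ρ_M(g) = 1` and `ρ(g) = 1 + p^M·A` (the product `p^M·A` being computed by
multiplying any lift of `A` to `ℤ/p^{2M}ℤ` by `p^M`). -/
def Mcal (p n M : ℕ) {G : Type*} [Group G]
    (ρ : G →* Matrix.GeneralLinearGroup (Fin n) (ZMod (p ^ (2 * M)))) :
    Set (Matrix (Fin n) (Fin n) (ZMod (p ^ M))) :=
  {A | ∃ g : G,
    ((ρ g).val.map (ZMod.castHom (pow_dvd_pow p (by omega : M ≤ 2 * M)) (ZMod (p ^ M))) = 1) ∧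
    ∃ Alift : Matrix (Fin n) (Fin n) (ZMod (p ^ (2 * M))),
      Alift.map (ZMod.castHom (pow_dvd_pow p (by omega : M ≤ 2 * M)) (ZMod (p ^ M))) = A ∧
      (ρ g).val = 1 + ((p : ZMod (p ^ (2 * M))) ^ M) • Alift}

-- key scalar lemma
lemma key_scalar (p M : ℕ) (hp : p.Prime) (hM : 1 ≤ M)
    (a : ZMod (p ^ (2 * M))) (b : ZMod (p ^ M))
    (h : ZMod.castHom (pow_dvd_pow p (by omega : M ≤ 2 * M)) (ZMod (p ^ M)) a
        = (p : ZMod (p ^ M)) ^ (M - 1) * b) :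
    (p : ZMod (p ^ (2 * M))) ^ M * a
      = (p : ZMod (p ^ (2 * M))) ^ (2 * M - 1) * ((b.val : ℕ) : ZMod (p ^ (2 * M))) := by
  haveI : NeZero (p ^ (2 * M)) := ⟨pow_ne_zero _ hp.ne_zero⟩
  haveI : NeZero (p ^ M) := ⟨pow_ne_zero _ hp.ne_zero⟩
  have h1 : ((a.val : ℕ) : ZMod (p ^ M)) = ((p ^ (M - 1) * b.val : ℕ) : ZMod (p ^ M)) := by
    rw [ZMod.natCast_val, ← ZMod.castHom_apply (h := pow_dvd_pow p (by omega : M ≤ 2 * M)), h]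
    push_cast
    rw [ZMod.natCast_val, ZMod.cast_id]
  rw [ZMod.natCast_eq_natCast_iff] at h1
  obtain ⟨k, hk⟩ := h1.dvd
  have ha : ((a.val : ℤ) : ZMod (p ^ (2 * M))) = a := by
    push_cast
    rw [ZMod.natCast_val, ZMod.cast_id]
  have hz : ((p : ZMod (p ^ (2 * M))) ^ (2 * M)) = 0 := by
    have := ZMod.natCast_self (p ^ (2 * M))
    push_cast at this
    exact this
  push_cast at hk
  have hav : (a.val : ℤ) = p ^ (M - 1) * b.val + p ^ M * (-k) := by linarith
  calc (p : ZMod (p ^ (2 * M))) ^ M * a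
      = (p : ZMod (p ^ (2 * M))) ^ M * ((a.val : ℤ) : ZMod (p ^ (2 * M))) := by rw [ha]
    _ = (p : ZMod (p ^ (2 * M))) ^ (2 * M - 1) * ((b.val : ℕ) : ZMod (p ^ (2 * M))) := by
        rw [hav]
        push_cast
        have e1 : (p : ZMod (p ^ (2 * M))) ^ M * (p : ZMod (p ^ (2 * M))) ^ (M - 1)
            = (p : ZMod (p ^ (2 * M))) ^ (2 * M - 1) := by
          rw [← pow_add]; congr 1; omega
        have e2 : (p : ZMod (p ^ (2 * M))) ^ M * (p : ZMod (p ^ (2 * M))) ^ M = 0 := by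
          rw [← pow_add, show M + M = 2 * M by omega, hz]
        rw [mul_add, ← mul_assoc, e1, ← mul_assoc, e2, zero_mul, add_zero]

theorem stmt_16 (p n M : ℕ) (hp : p.Prime) (hn : 1 ≤ n) (hM : 1 ≤ M)
    {G : Type*} [Group G]
    (ρ : G →* Matrix.GeneralLinearGroup (Fin n) (ZMod (p ^ (2 * M))))
    (B : Matrix (Fin n) (Fin n) (ZMod p)) :
    (∃ (g : G) (Blift : Matrix (Fin n) (Fin n) (ZMod (p ^ (2 * M)))),
      Blift.map (ZMod.castHom (dvd_pow_self p (by omega : 2 * M ≠ 0)) (ZMod p)) = B ∧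
      (ρ g).val = 1 + ((p : ZMod (p ^ (2 * M))) ^ (2 * M - 1)) • Blift) ↔
    (∃ Bhat : Matrix (Fin n) (Fin n) (ZMod (p ^ M)),
      Bhat.map (ZMod.castHom (dvd_pow_self p (by omega : M ≠ 0)) (ZMod p)) = B ∧
      ((p : ZMod (p ^ M)) ^ (M - 1)) • Bhat ∈ Mcal p n M ρ) := by
  haveI : NeZero (p ^ (2 * M)) := ⟨pow_ne_zero _ hp.ne_zero⟩
  haveI : NeZero (p ^ M) := ⟨pow_ne_zero _ hp.ne_zero⟩
  have hpM0 : ((p : ZMod (p ^ M)) ^ M) = 0 := by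
    have := ZMod.natCast_self (p ^ M); push_cast at this; exact this
  have f := ZMod.castHom (pow_dvd_pow p (by omega : M ≤ 2 * M)) (ZMod (p ^ M))
  constructor
  · rintro ⟨g, Blift, hB, hρ⟩
    refine ⟨Blift.map (ZMod.castHom (pow_dvd_pow p (by omega : M ≤ 2 * M)) (ZMod (p ^ M))),
      ?_, g, ?_, ((p : ZMod (p ^ (2 * M))) ^ (M - 1)) • Blift, ?_, ?_⟩
    · ext i j
      rw [← hB]
      simp only [Matrix.map_apply]
      rw [← RingHom.comp_apply, ZMod.castHom_comp]
    · rw [hρ]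
      ext i j
      simp only [Matrix.map_apply, Matrix.add_apply, Matrix.smul_apply, smul_eq_mul, map_add,
        map_mul, map_pow, map_natCast, Matrix.one_apply]
      have : ((p : ZMod (p ^ M)) ^ (2 * M - 1)) = 0 := by
        rw [show 2 * M - 1 = M + (M - 1) by omega, pow_add, hpM0, zero_mul]
      rw [this, zero_mul, add_zero]
      split <;> simp [ZMod.cast_one (pow_dvd_pow p (by omega : M ≤ 2*M)), ZMod.cast_zero]
    · ext i j
      simp only [Matrix.map_apply, Matrix.smul_apply, smul_eq_mul, map_mul, map_pow, map_natCast]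
    · rw [hρ, smul_smul, ← pow_add, show M + (M - 1) = 2 * M - 1 by omega]
  · rintro ⟨Bhat, hB, g, hg1, Alift, hA, hρ⟩
    refine ⟨g, Bhat.map (fun x => ((x.val : ℕ) : ZMod (p ^ (2 * M)))), ?_, ?_⟩
    · ext i j
      rw [← hB]
      simp only [Matrix.map_apply, map_natCast]
      rw [ZMod.natCast_val, ← ZMod.castHom_apply (h := dvd_pow_self p (by omega : M ≠ 0))]
    · rw [hρ]
      congr 1
      ext i j
      simp only [Matrix.smul_apply, smul_eq_mul, Matrix.map_apply]
      apply key_scalar p M hp hM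
      have h2 : (Alift.map (ZMod.castHom (pow_dvd_pow p (by omega : M ≤ 2 * M)) (ZMod (p ^ M)))) i j
          = (((p : ZMod (p ^ M)) ^ (M - 1)) • Bhat) i j := by rw [hA]
      simpa [Matrix.map_apply, Matrix.smul_apply, smul_eq_mul] using h2
end
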